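/- arXiv:2207.09187 — 19 statements merged into one kernel-verified Lean document; each statement's English description precedes it below -/
import Mathlib

section
/- Let V be a commutative unital quantale and (X,a) a V-category. The set of V-functors from (X,a) to (V,hom) is L-closed in the V-powered category V^X. Concretely: equip the set of all maps X → V with the V-category structure [h,l] := ⨅_{x∈X} hom(h x, l x); if g : X → V satisfies k ≤ ⨆_{f} ([g,f] ⊗ [f,g]), where the supremum ranges over all maps f : X → V such that a x y ≤ hom (f x) (f y) for all x,y ∈ X, then g itself satisfies a x y ≤ hom (g x) (g y) for all x,y ∈ X. -/
/-- The set of V-functors from a V-category (X,a) to (V,hom) is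
L-closed in the V-power V^X. -/
theorem vfunctors_L_closed
    {V : Type*} [CompleteLattice V]
    (ten : V → V → V) (k : V) (hom : V → V → V)
    (ten_comm : ∀ u v : V, ten u v = ten v u)
    (ten_assoc : ∀ u v w : V, ten (ten u v) w = ten u (ten v w))
    (ten_unit : ∀ u : V, ten k u = u)
    (ten_sup : ∀ (u : V) (S : Set V), ten u (sSup S) = ⨆ v ∈ S, ten u v)
    (hom_adj : ∀ u v w : V, ten u v ≤ w ↔ v ≤ hom u w)
    {X : Type*} (a : X → X → V)
    (ha_refl : ∀ x, k ≤ a x x)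
    (ha_trans : ∀ x y z, ten (a x y) (a y z) ≤ a x z)
    (g : X → V)
    (hg : k ≤ ⨆ f ∈ {f : X → V | ∀ x y, a x y ≤ hom (f x) (f y)},
            ten (⨅ x, hom (g x) (f x)) (⨅ x, hom (f x) (g x))) :
    ∀ x y, a x y ≤ hom (g x) (g y) := by
  have mono : ∀ (u : V) {v w : V}, v ≤ w → ten u v ≤ ten u w := by
    intro u v w h
    rw [hom_adj]
    exact h.trans ((hom_adj u w (ten u w)).mp le_rfl)
  have mono' : ∀ {u v : V} (w : V), u ≤ v → ten u w ≤ ten v w := by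
    intro u v w h
    rw [ten_comm u w, ten_comm v w]
    exact mono w h
  have ev : ∀ u w : V, ten u (hom u w) ≤ w := fun u w => (hom_adj u (hom u w) w).mpr le_rfl
  intro x y
  rw [← hom_adj]
  have key : ∀ f ∈ {f : X → V | ∀ x y, a x y ≤ hom (f x) (f y)},
      ten (⨅ x, hom (g x) (f x)) (⨅ x, hom (f x) (g x))
        ≤ hom (ten (g x) (a x y)) (g y) := by
    intro f hf
    rw [← hom_adj]
    set A := ⨅ x, hom (g x) (f x) with hA
    set B := ⨅ x, hom (f x) (g x) with hB
    have h1 : ten A (g x) ≤ f x := by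
      refine le_trans (mono' (g x) (iInf_le _ x)) ?_
      rw [ten_comm]; exact ev _ _
    have h2 : ten (ten A (g x)) (a x y) ≤ f y := by
      refine le_trans (mono' (a x y) h1) ?_
      exact le_trans (mono (f x) (hf x y)) (ev _ _)
    have h3 : ten B (f y) ≤ g y := by
      refine le_trans (mono' (f y) (iInf_le _ y)) ?_
      rw [ten_comm]; exact ev _ _
    calc ten (ten (g x) (a x y)) (ten A B)
        = ten B (ten (ten A (g x)) (a x y)) := by
          rw [ten_comm, ten_comm A B, ten_assoc, ten_assoc]
      _ ≤ ten B (f y) := mono B h2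
      _ ≤ g y := h3
  have hsup : (⨆ f ∈ {f : X → V | ∀ x y, a x y ≤ hom (f x) (f y)},
      ten (⨅ x, hom (g x) (f x)) (⨅ x, hom (f x) (g x)))
        ≤ hom (ten (g x) (a x y)) (g y) := iSup₂_le key
  calc ten (g x) (a x y) = ten k (ten (g x) (a x y)) := (ten_unit _).symm
    _ ≤ ten (⨆ f ∈ {f : X → V | ∀ x y, a x y ≤ hom (f x) (f y)},
          ten (⨅ x, hom (g x) (f x)) (⨅ x, hom (f x) (g x))) (ten (g x) (a x y)) :=
        mono' _ hg
    _ = ten (ten (g x) (a x y)) _ := ten_comm _ _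
    _ ≤ g y := (hom_adj _ _ _).mpr hsup
end

section
/- Let V be a commutative unital quantale and (X,a) a symmetric V-category. The set of V-functors from (X,a) to V_s is L-closed in V_s^X. Concretely: equip the set of all maps X → V with the symmetric V-category structure [h,l]_s := ⨅_{x∈X} hom_s(h x, l x); if g : X → V satisfies k ≤ ⨆_{f} ([g,f]_s ⊗ [f,g]_s), where the supremum ranges over all maps f : X → V such that a x y ≤ hom_s (f x) (f y) for all x,y ∈ X, then g itself satisfies a x y ≤ hom_s (g x) (g y) for all x,y ∈ X. -/
/-- Symmetrized hom: `hom_s(u,v) = hom(u,v) ⊓ hom(v,u)`. -/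
def homs {V : Type*} [Lattice V] (hom : V → V → V) (u v : V) : V :=
  hom u v ⊓ hom v u

/-- The set of V-functors from a symmetric V-category (X,a) to V_s is
L-closed in V_s^X. -/
theorem vfunctors_sym_L_closed
    {V : Type*} [CompleteLattice V]
    (ten : V → V → V) (k : V) (hom : V → V → V)
    (ten_comm : ∀ u v : V, ten u v = ten v u)
    (ten_assoc : ∀ u v w : V, ten (ten u v) w = ten u (ten v w))
    (ten_unit : ∀ u : V, ten k u = u)
    (ten_sup : ∀ (u : V) (S : Set V), ten u (sSup S) = ⨆ v ∈ S, ten u v)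
    (hom_adj : ∀ u v w : V, ten u v ≤ w ↔ v ≤ hom u w)
    {X : Type*} (a : X → X → V)
    (ha_refl : ∀ x, k ≤ a x x)
    (ha_trans : ∀ x y z, ten (a x y) (a y z) ≤ a x z)
    (ha_symm : ∀ x y, a x y = a y x)
    (g : X → V)
    (hg : k ≤ ⨆ f ∈ {f : X → V | ∀ x y, a x y ≤ homs hom (f x) (f y)},
            ten (⨅ x, homs hom (g x) (f x)) (⨅ x, homs hom (f x) (g x))) :
    ∀ x y, a x y ≤ homs hom (g x) (g y) := by
  -- monotonicity of ten
  have mono_r : ∀ u {v v' : V}, v ≤ v' → ten u v ≤ ten u v' := by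
    intro u v v' h
    exact (hom_adj u v (ten u v')).mpr (h.trans ((hom_adj u v' (ten u v')).mp le_rfl))
  have mono_l : ∀ {u u' : V} (v : V), u ≤ u' → ten u v ≤ ten u' v := by
    intro u u' v h
    rw [ten_comm u v, ten_comm u' v]; exact mono_r v h
  -- key: ten (a x y) (g x) ≤ g y
  have key : ∀ x y, ten (a x y) (g x) ≤ g y := by
    intro x y
    have hstep : ∀ f ∈ {f : X → V | ∀ x y, a x y ≤ homs hom (f x) (f y)},
        ten (ten (a x y) (g x))
          (ten (⨅ x, homs hom (g x) (f x)) (⨅ x, homs hom (f x) (g x))) ≤ g y := by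
      intro f hf
      set A := ⨅ x, homs hom (g x) (f x) with hA
      set B := ⨅ x, homs hom (f x) (g x) with hB
      have h1 : ten (g x) A ≤ f x := by
        refine (hom_adj _ _ _).mpr ?_
        exact (iInf_le _ x).trans inf_le_left
      have h2 : ten (f x) (a x y) ≤ f y :=
        (hom_adj _ _ _).mpr ((hf x y).trans inf_le_left)
      have h3 : ten (f y) B ≤ g y := by
        refine (hom_adj _ _ _).mpr ?_
        exact (iInf_le _ y).trans inf_le_left
      calc ten (ten (a x y) (g x)) (ten A B)
          = ten (ten (a x y) (ten (g x) A)) B := by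
            rw [← ten_assoc (ten (a x y) (g x)) A B, ten_assoc (a x y) (g x) A]
        _ ≤ ten (ten (a x y) (f x)) B := mono_l B (mono_r _ h1)
        _ = ten (ten (f x) (a x y)) B := by rw [ten_comm (a x y)]
        _ ≤ ten (f y) B := mono_l B h2
        _ ≤ g y := h3
    have hsup : (⨆ f ∈ {f : X → V | ∀ x y, a x y ≤ homs hom (f x) (f y)},
        ten (⨅ x, homs hom (g x) (f x)) (⨅ x, homs hom (f x) (g x)))
          ≤ hom (ten (a x y) (g x)) (g y) :=
      iSup₂_le fun f hf => (hom_adj _ _ _).mp (hstep f hf)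
    have : ten (ten (a x y) (g x)) k ≤ g y :=
      (hom_adj _ _ _).mpr (hg.trans hsup)
    rwa [ten_comm _ k, ten_unit] at this
  intro x y
  refine le_inf ?_ ?_
  · refine (hom_adj _ _ _).mp ?_
    rw [ten_comm]; exact key x y
  · refine (hom_adj _ _ _).mp ?_
    rw [ten_comm, ha_symm]; exact key y x
end

section
/- Let V be a commutative unital quantale, (X,a) a V-category, and A ⊆ X. Let Ā := {x ∈ X | k ≤ ⨆_{y∈A} a x y ⊗ a y x} be the L-closure of A, and equip Ā with the restriction of a. Then A is L-dense in (Ā, a): for any two V-functors f, g : (Ā, a) → (V, hom), if f and g agree on A, then f = g on all of Ā. -/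
/-- A subset A of a V-category (X,a) is L-dense in its L-closure Ā
(equipped with the restriction of a): any two V-functors (Ā,a) → (V,hom) agreeing
on A are equal. -/
theorem dense_in_L_closure
    {V : Type*} [CompleteLattice V]
    (ten : V → V → V) (k : V) (hom : V → V → V)
    (ten_comm : ∀ u v : V, ten u v = ten v u)
    (ten_assoc : ∀ u v w : V, ten (ten u v) w = ten u (ten v w))
    (ten_unit : ∀ u : V, ten k u = u)
    (ten_sup : ∀ (u : V) (S : Set V), ten u (sSup S) = ⨆ v ∈ S, ten u v)
    (hom_adj : ∀ u v w : V, ten u v ≤ w ↔ v ≤ hom u w)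
    {X : Type*} (a : X → X → V)
    (ha_refl : ∀ x, k ≤ a x x)
    (ha_trans : ∀ x y z, ten (a x y) (a y z) ≤ a x z)
    (A : Set X)
    (f g : {x : X // k ≤ ⨆ y ∈ A, ten (a x y) (a y x)} → V)
    (hf : ∀ p q, a p.1 q.1 ≤ hom (f p) (f q))
    (hg : ∀ p q, a p.1 q.1 ≤ hom (g p) (g q))
    (hagree : ∀ p, p.1 ∈ A → f p = g p) :
    f = g := by
  -- monotonicity of ten in the second argument
  have mono : ∀ (u : V) {v w : V}, v ≤ w → ten u v ≤ ten u w := by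
    intro u v w h
    exact (hom_adj u v (ten u w)).2 (le_trans h ((hom_adj u w (ten u w)).1 le_rfl))
  have mono' : ∀ {u u' : V} (v : V), u ≤ u' → ten u v ≤ ten u' v := by
    intro u u' v h
    rw [ten_comm u v, ten_comm u' v]; exact mono v h
  have key : ∀ (F G : {x : X // k ≤ ⨆ y ∈ A, ten (a x y) (a y x)} → V),
      (∀ p q, a p.1 q.1 ≤ hom (F p) (F q)) →
      (∀ p q, a p.1 q.1 ≤ hom (G p) (G q)) →
      (∀ p, p.1 ∈ A → F p = G p) → ∀ p, F p ≤ G p := by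
    intro F G hF hG hA p
    have hsup : (⨆ y ∈ A, ten (a p.1 y) (a y p.1)) ≤ hom (F p) (G p) := by
      apply iSup₂_le
      intro y hy
      have hyq : k ≤ ⨆ z ∈ A, ten (a y z) (a z y) := by
        calc k = ten k k := (ten_unit k).symm
        _ ≤ ten (a y y) (a y y) :=
          le_trans (mono' k (ha_refl y)) (mono (a y y) (ha_refl y))
        _ ≤ ⨆ z ∈ A, ten (a y z) (a z y) :=
          le_iSup₂ (f := fun z (_ : z ∈ A) => ten (a y z) (a z y)) y hy
      set q : {x : X // k ≤ ⨆ y ∈ A, ten (a x y) (a y x)} := ⟨y, hyq⟩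
      have h1 : ten (a p.1 y) (F p) ≤ G q := by
        rw [ten_comm]
        exact le_trans ((hom_adj (F p) (a p.1 y) (F q)).2 (hF p q)) (le_of_eq (hA q hy))
      have h2 : ten (a y p.1) (G q) ≤ G p := by
        rw [ten_comm]
        exact (hom_adj (G q) (a y p.1) (G p)).2 (hG q p)
      refine (hom_adj (F p) _ (G p)).1 ?_
      rw [ten_comm]
      calc ten (ten (a p.1 y) (a y p.1)) (F p)
          = ten (a y p.1) (ten (a p.1 y) (F p)) := by
            rw [ten_comm (a p.1 y) (a y p.1), ten_assoc]
        _ ≤ ten (a y p.1) (G q) := mono _ h1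
        _ ≤ G p := h2
    have hk : k ≤ hom (F p) (G p) := le_trans p.2 hsup
    calc F p = ten k (F p) := (ten_unit (F p)).symm
      _ ≤ ten (hom (F p) (G p)) (F p) := mono' (F p) hk
      _ ≤ G p := by
          rw [ten_comm]
          exact (hom_adj (F p) (hom (F p) (G p)) (G p)).2 le_rfl
  funext p
  exact le_antisymm (key f g hf hg hagree p)
    (key g f hg hf (fun p h => (hagree p h).symm) p)
end

section
/- Let V be a commutative unital quantale, (X,a) a V-category, and A ⊆ X. The set Ā := {x ∈ X | k ≤ ⨆_{y∈A} a x y ⊗ a y x} is the largest V-subcategory of (X,a) in which A is L-dense: if B is any subset of X with A ⊆ B such that A is L-dense in (B, a) (with a restricted to B), then B ⊆ Ā. -/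
/-- The L-closure Ā of A in a V-category (X,a) is the largest
V-subcategory of (X,a) in which A is L-dense: any B ⊇ A on which A is L-dense
(w.r.t. the restricted structure) is contained in Ā. -/
theorem L_closure_largest_dense
    {V : Type*} [CompleteLattice V]
    (ten : V → V → V) (k : V) (hom : V → V → V)
    (ten_comm : ∀ u v : V, ten u v = ten v u)
    (ten_assoc : ∀ u v w : V, ten (ten u v) w = ten u (ten v w))
    (ten_unit : ∀ u : V, ten k u = u)
    (ten_sup : ∀ (u : V) (S : Set V), ten u (sSup S) = ⨆ v ∈ S, ten u v)
    (hom_adj : ∀ u v w : V, ten u v ≤ w ↔ v ≤ hom u w)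
    {X : Type*} (a : X → X → V)
    (ha_refl : ∀ x, k ≤ a x x)
    (ha_trans : ∀ x y z, ten (a x y) (a y z) ≤ a x z)
    (A B : Set X) (hAB : A ⊆ B)
    (hdense : ∀ f g : {x : X // x ∈ B} → V,
        (∀ p q, a p.1 q.1 ≤ hom (f p) (f q)) →
        (∀ p q, a p.1 q.1 ≤ hom (g p) (g q)) →
        (∀ p, p.1 ∈ A → f p = g p) → f = g) :
    ∀ x ∈ B, k ≤ ⨆ y ∈ A, ten (a x y) (a y x) := by
  intro x hx
  have mono : ∀ u v w : V, v ≤ w → ten u v ≤ ten u w := fun u v w h =>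
    (hom_adj u v (ten u w)).mpr (h.trans ((hom_adj u w (ten u w)).mp le_rfl))
  have key := hdense (fun p => ⨆ y ∈ A, ten (a x y) (a y p.1)) (fun p => a x p.1)
    ?_ ?_ ?_
  · calc k ≤ a x x := ha_refl x
      _ = ⨆ y ∈ A, ten (a x y) (a y x) := (congrFun key ⟨x, hx⟩).symm
  · -- f is a V-functor
    intro p q
    rw [← hom_adj, ten_comm, hom_adj]
    refine iSup₂_le fun y hy => ?_
    rw [← hom_adj, ten_comm (a p.1 q.1), ten_assoc]
    calc ten (a x y) (ten (a y p.1) (a p.1 q.1))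
        ≤ ten (a x y) (a y q.1) := mono _ _ _ (ha_trans _ _ _)
      _ ≤ ⨆ y ∈ A, ten (a x y) (a y q.1) := le_iSup₂_of_le y hy le_rfl
  · -- g is a V-functor
    intro p q
    rw [← hom_adj]
    exact ha_trans x p.1 q.1
  · -- f and g agree on A
    intro p hp
    refine le_antisymm (iSup₂_le fun y hy => ha_trans _ _ _) ?_
    calc a x p.1 = ten k (a x p.1) := (ten_unit _).symm
      _ = ten (a x p.1) k := ten_comm _ _
      _ ≤ ten (a x p.1) (a p.1 p.1) := mono _ _ _ (ha_refl _)
      _ ≤ ⨆ y ∈ A, ten (a x y) (a y p.1) := le_iSup₂_of_le p.1 hp le_rfl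
end

section
/- Let V be a commutative unital quantale and X a set. For a set A of maps X → V, define Fun(A) := {f : X → V | for all x,y ∈ X, (⨅_{g∈A} hom_s (g x) (g y)) ≤ hom_s (f x) (f y)}. Let C be a closure operator on the powerset of the set of maps X → V (extensive, monotone, idempotent) such that for every symmetric V-category structure a on X, the set of V-functors (X,a) → V_s is a fixed point of C. Then C(A) ⊆ Fun(A) for every set A of maps X → V. -/
/-- Fun is the greatest V_s-closure operator: every V_s-closure operator C
satisfies C(A) ⊆ Fun(A). -/
theorem closure_le_fun
    {V : Type*} [CompleteLattice V]
    (ten : V → V → V) (k : V) (hom : V → V → V)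
    (ten_comm : ∀ u v : V, ten u v = ten v u)
    (ten_assoc : ∀ u v w : V, ten (ten u v) w = ten u (ten v w))
    (ten_unit : ∀ u : V, ten k u = u)
    (ten_sup : ∀ (u : V) (S : Set V), ten u (sSup S) = ⨆ v ∈ S, ten u v)
    (hom_adj : ∀ u v w : V, ten u v ≤ w ↔ v ≤ hom u w)
    {X : Type*}
    (C : Set (X → V) → Set (X → V))
    (hC_ext : ∀ A, A ⊆ C A)
    (hC_mono : ∀ A B, A ⊆ B → C A ⊆ C B)
    (hC_idem : ∀ A, C (C A) = C A)
    (hC_fix : ∀ a : X → X → V,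
        (∀ x, k ≤ a x x) → (∀ x y z, ten (a x y) (a y z) ≤ a x z) →
        (∀ x y, a x y = a y x) →
        C {f : X → V | ∀ x y, a x y ≤ homs hom (f x) (f y)} =
          {f : X → V | ∀ x y, a x y ≤ homs hom (f x) (f y)})
    (A : Set (X → V)) :
    C A ⊆ {f : X → V |
      ∀ x y, (⨅ g ∈ A, homs hom (g x) (g y)) ≤ homs hom (f x) (f y)} := by
  -- basic facts
  have ten_mono_right : ∀ u {v w : V}, v ≤ w → ten u v ≤ ten u w := by
    intro u v w hvw
    have : w ≤ hom u (ten u w) := (hom_adj u w (ten u w)).mp le_rfl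
    exact (hom_adj u v (ten u w)).mpr (le_trans hvw this)
  have ten_mono : ∀ {u u' v v' : V}, u ≤ u' → v ≤ v' → ten u v ≤ ten u' v' := by
    intro u u' v v' hu hv
    calc ten u v ≤ ten u v' := ten_mono_right u hv
    _ = ten v' u := ten_comm _ _
    _ ≤ ten v' u' := ten_mono_right v' hu
    _ = ten u' v' := ten_comm _ _
  have counit : ∀ u v : V, ten u (hom u v) ≤ v := fun u v =>
    (hom_adj u (hom u v) v).mpr le_rfl
  have k_le_hom : ∀ u : V, k ≤ hom u u := by
    intro u
    exact (hom_adj u k u).mp (le_of_eq (by rw [ten_comm, ten_unit]))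
  have hom_comp : ∀ u v w : V, ten (hom u v) (hom v w) ≤ hom u w := by
    intro u v w
    apply (hom_adj u _ w).mp
    rw [← ten_assoc]
    exact le_trans (ten_mono (counit u v) le_rfl) (counit v w)
  have homs_comp : ∀ u v w : V, ten (homs hom u v) (homs hom v w) ≤ homs hom u w := by
    intro u v w
    refine le_inf ?_ ?_
    · exact le_trans (ten_mono inf_le_left inf_le_left) (hom_comp u v w)
    · calc ten (homs hom u v) (homs hom v w)
          ≤ ten (hom v u) (hom w v) := ten_mono inf_le_right inf_le_right
        _ = ten (hom w v) (hom v u) := ten_comm _ _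
        _ ≤ hom w u := hom_comp w v u
  -- the structure
  set a : X → X → V := fun x y => ⨅ g ∈ A, homs hom (g x) (g y) with ha
  have hrefl : ∀ x, k ≤ a x x := by
    intro x
    refine le_iInf fun g => le_iInf fun _ => le_inf (k_le_hom _) (k_le_hom _)
  have htrans : ∀ x y z, ten (a x y) (a y z) ≤ a x z := by
    intro x y z
    refine le_iInf fun g => le_iInf fun hg => ?_
    have h1 : a x y ≤ homs hom (g x) (g y) := iInf_le_of_le g (iInf_le _ hg)
    have h2 : a y z ≤ homs hom (g y) (g z) := iInf_le_of_le g (iInf_le _ hg)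
    exact le_trans (ten_mono h1 h2) (homs_comp _ _ _)
  have hsymm : ∀ x y, a x y = a y x := by
    intro x y
    simp only [ha, homs, inf_comm]
  have hfix := hC_fix a hrefl htrans hsymm
  have hsub : A ⊆ {f : X → V | ∀ x y, a x y ≤ homs hom (f x) (f y)} := by
    intro g hg x y
    exact iInf_le_of_le g (iInf_le _ hg)
  intro f hf
  have := hC_mono _ _ hsub hf
  rw [hfix] at this
  exact this
end

section
/- Let V be a commutative unital quantale, X a set, and C a closure operator on the powerset of the set of maps X → V (extensive, monotone, idempotent) such that for every symmetric V-category structure a on X, the set of V-functors (X,a) → V_s is a fixed point of C (a V_s-closure operator). Let (X,a) be a symmetric V-category and A a set of V-functors (X,a) → V_s. If A is C-dense, in the sense that every V-functor f : (X,a) → V_s belongs to C(A), then A is initial: a x y = ⨅_{g∈A} hom_s (g x) (g y) for all x,y ∈ X. -/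
/-- If a set A of V-functors (X,a) → V_s is C-dense for a V_s-closure
operator C, then A is initial. -/
theorem cdense_initial
    {V : Type*} [CompleteLattice V]
    (ten : V → V → V) (k : V) (hom : V → V → V)
    (ten_comm : ∀ u v : V, ten u v = ten v u)
    (ten_assoc : ∀ u v w : V, ten (ten u v) w = ten u (ten v w))
    (ten_unit : ∀ u : V, ten k u = u)
    (ten_sup : ∀ (u : V) (S : Set V), ten u (sSup S) = ⨆ v ∈ S, ten u v)
    (hom_adj : ∀ u v w : V, ten u v ≤ w ↔ v ≤ hom u w)
    {X : Type*}
    (C : Set (X → V) → Set (X → V))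
    (hC_ext : ∀ A, A ⊆ C A)
    (hC_mono : ∀ A B, A ⊆ B → C A ⊆ C B)
    (hC_idem : ∀ A, C (C A) = C A)
    (hC_fix : ∀ a : X → X → V,
        (∀ x, k ≤ a x x) → (∀ x y z, ten (a x y) (a y z) ≤ a x z) →
        (∀ x y, a x y = a y x) →
        C {f : X → V | ∀ x y, a x y ≤ homs hom (f x) (f y)} =
          {f : X → V | ∀ x y, a x y ≤ homs hom (f x) (f y)})
    (a : X → X → V)
    (ha_refl : ∀ x, k ≤ a x x)
    (ha_trans : ∀ x y z, ten (a x y) (a y z) ≤ a x z)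
    (ha_symm : ∀ x y, a x y = a y x)
    (A : Set (X → V))
    (hA : ∀ g ∈ A, ∀ x y, a x y ≤ homs hom (g x) (g y))
    (hdense : ∀ f : X → V, (∀ x y, a x y ≤ homs hom (f x) (f y)) → f ∈ C A) :
    ∀ x y, a x y = ⨅ g ∈ A, homs hom (g x) (g y) := by
  -- monotonicity of ten in the second argument
  have tmono : ∀ (w : V) {u v : V}, u ≤ v → ten w u ≤ ten w v := by
    intro w u v h
    exact (hom_adj w u (ten w v)).mpr (h.trans ((hom_adj w v (ten w v)).mp le_rfl))
  have tmono' : ∀ (w : V) {u v : V}, u ≤ v → ten u w ≤ ten v w := by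
    intro w u v h
    rw [ten_comm u w, ten_comm v w]; exact tmono w h
  -- counit: ten u (hom u v) ≤ v
  have counit : ∀ u v : V, ten u (hom u v) ≤ v := fun u v =>
    (hom_adj u (hom u v) v).mpr le_rfl
  -- k ≤ hom u u
  have hkhom : ∀ u : V, k ≤ hom u u := fun u =>
    (hom_adj u k u).mp (by rw [ten_comm, ten_unit])
  -- the candidate structure b
  set b : X → X → V := fun x y => ⨅ g ∈ A, homs hom (g x) (g y) with hb
  have hb_refl : ∀ x, k ≤ b x x := by
    intro x
    refine le_iInf₂ fun g _ => le_inf (hkhom _) (hkhom _)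
  have homs_symm : ∀ u v : V, homs hom u v = homs hom v u := by
    intro u v; simp [homs, inf_comm]
  have hb_symm : ∀ x y, b x y = b y x := by
    intro x y; simp only [hb]
    exact iInf_congr fun g => iInf_congr fun _ => homs_symm _ _
  -- transitivity for homs
  have homs_trans : ∀ u v w : V,
      ten (homs hom u v) (homs hom v w) ≤ homs hom u w := by
    intro u v w
    have h1 : ten (homs hom u v) (homs hom v w) ≤ hom u w := by
      refine (hom_adj u _ w).mp ?_
      rw [← ten_assoc]
      calc ten (ten u (homs hom u v)) (homs hom v w)
          ≤ ten v (homs hom v w) := by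
            refine tmono' _ ?_
            exact (tmono u (inf_le_left : homs hom u v ≤ hom u v)).trans (counit u v)
        _ ≤ ten v (hom v w) := tmono _ inf_le_left
        _ ≤ w := counit v w
    have h2 : ten (homs hom u v) (homs hom v w) ≤ hom w u := by
      refine (hom_adj w _ u).mp ?_
      rw [← ten_assoc]
      calc ten (ten w (homs hom u v)) (homs hom v w)
          ≤ ten (homs hom v w) (ten w (homs hom u v)) := le_of_eq (ten_comm _ _)
        _ = ten (ten (homs hom v w) w) (homs hom u v) := by
            rw [ten_assoc]
        _ ≤ ten v (homs hom u v) := by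
            refine tmono' _ ?_
            rw [ten_comm]
            exact (tmono w (inf_le_right : homs hom v w ≤ hom w v)).trans (counit w v)
        _ ≤ ten v (hom v u) := tmono _ inf_le_right
        _ ≤ u := counit v u
    exact le_inf h1 h2
  have hb_trans : ∀ x y z, ten (b x y) (b y z) ≤ b x z := by
    intro x y z
    refine le_iInf₂ fun g hg => ?_
    calc ten (b x y) (b y z)
        ≤ ten (homs hom (g x) (g y)) (homs hom (g y) (g z)) := by
          exact (tmono' _ (iInf₂_le g hg)).trans (tmono _ (iInf₂_le g hg))
      _ ≤ homs hom (g x) (g z) := homs_trans _ _ _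
  -- every element of C A is a b-functor
  have hCA : C A ⊆ {f : X → V | ∀ x y, b x y ≤ homs hom (f x) (f y)} := by
    have hsub : A ⊆ {f : X → V | ∀ x y, b x y ≤ homs hom (f x) (f y)} := by
      intro g hg x y
      exact iInf₂_le g hg
    have := hC_mono _ _ hsub
    rwa [hC_fix b hb_refl hb_trans hb_symm] at this
  intro x y
  refine le_antisymm (le_iInf₂ fun g hg => hA g hg x y) ?_
  -- a x is a V-functor (X,a) → V_s
  have hfun : ∀ y z, a y z ≤ homs hom (a x y) (a x z) := by
    intro y z
    refine le_inf ?_ ?_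
    · exact (hom_adj _ _ _).mp (ha_trans x y z)
    · refine (hom_adj _ _ _).mp ?_
      calc ten (a x z) (a y z) = ten (a x z) (a z y) := by rw [ha_symm y z]
        _ ≤ a x y := ha_trans x z y
  have hmem : (a x) ∈ C A := hdense (a x) hfun
  have hbx : b x y ≤ homs hom (a x x) (a x y) := hCA hmem x y
  calc b x y = ten k (b x y) := (ten_unit _).symm
    _ ≤ ten (a x x) (b x y) := tmono' _ (ha_refl x)
    _ ≤ ten (a x x) (hom (a x x) (a x y)) := tmono _ (hbx.trans inf_le_left)
    _ ≤ a x y := counit _ _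
end

section
/- Let V be a commutative unital quantale, (X,a) a symmetric V-category, and A a set of V-functors (X,a) → V_s. Define Fun(A) := {f : X → V | for all x,y ∈ X, (⨅_{g∈A} hom_s (g x) (g y)) ≤ hom_s (f x) (f y)}. Then A is initial (a x y = ⨅_{g∈A} hom_s (g x) (g y) for all x,y) if and only if A is Fun-dense, i.e. every V-functor f : (X,a) → V_s belongs to Fun(A). -/
/-- A set A of V-functors (X,a) → V_s is initial iff it is Fun-dense. -/
theorem initial_iff_fun_dense
    {V : Type*} [CompleteLattice V]
    (ten : V → V → V) (k : V) (hom : V → V → V)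
    (ten_comm : ∀ u v : V, ten u v = ten v u)
    (ten_assoc : ∀ u v w : V, ten (ten u v) w = ten u (ten v w))
    (ten_unit : ∀ u : V, ten k u = u)
    (ten_sup : ∀ (u : V) (S : Set V), ten u (sSup S) = ⨆ v ∈ S, ten u v)
    (hom_adj : ∀ u v w : V, ten u v ≤ w ↔ v ≤ hom u w)
    {X : Type*} (a : X → X → V)
    (ha_refl : ∀ x, k ≤ a x x)
    (ha_trans : ∀ x y z, ten (a x y) (a y z) ≤ a x z)
    (ha_symm : ∀ x y, a x y = a y x)
    (A : Set (X → V))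
    (hA : ∀ g ∈ A, ∀ x y, a x y ≤ homs hom (g x) (g y)) :
    (∀ x y, a x y = ⨅ g ∈ A, homs hom (g x) (g y)) ↔
      (∀ f : X → V, (∀ x y, a x y ≤ homs hom (f x) (f y)) →
        ∀ x y, (⨅ g ∈ A, homs hom (g x) (g y)) ≤ homs hom (f x) (f y)) := by
  have ten_mono : ∀ u v w : V, v ≤ w → ten u v ≤ ten u w := by
    intro u v w hvw
    have h : ten u (sSup {v, w}) = ⨆ x ∈ ({v, w} : Set V), ten u x := ten_sup u _
    have h2 : sSup ({v, w} : Set V) = w := by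
      simp [sSup_insert, sup_eq_right.mpr hvw]
    rw [h2] at h
    rw [h]
    exact le_biSup _ (by simp)
  have counit : ∀ u w : V, ten u (hom u w) ≤ w := fun u w =>
    (hom_adj u (hom u w) w).mpr le_rfl
  constructor
  · intro hinit f hf x y
    rw [← hinit x y]
    exact hf x y
  · intro hdense x y
    apply le_antisymm
    · exact le_iInf fun g => le_iInf fun hg => hA g hg x y
    · -- f := a x is a functor
      have hf : ∀ y z, a y z ≤ homs hom (a x y) (a x z) := by
        intro y z
        refine le_inf ?_ ?_
        · exact (hom_adj _ _ _).mp (ha_trans x y z)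
        · have := ha_trans x z y
          rw [ha_symm z y] at this
          exact (hom_adj _ _ _).mp this
      have h := hdense (a x) hf x y
      have h2 : homs hom (a x x) (a x y) ≤ hom (a x x) (a x y) := inf_le_left
      have h3 : hom (a x x) (a x y) ≤ a x y := by
        calc hom (a x x) (a x y) = ten k (hom (a x x) (a x y)) := (ten_unit _).symm
        _ = ten (hom (a x x) (a x y)) k := ten_comm _ _
        _ ≤ ten (hom (a x x) (a x y)) (a x x) := ten_mono _ _ _ (ha_refl x)
        _ = ten (a x x) (hom (a x x) (a x y)) := ten_comm _ _
        _ ≤ a x y := counit _ _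
      exact h.trans (h2.trans h3)
end

section
/- Let V be a commutative unital quantale, X a set, and C a closure operator on the powerset of the set of maps X → V (extensive, monotone, idempotent) such that for every symmetric V-category structure a on X, the set of V-functors (X,a) → V_s is a fixed point of C (a V_s-closure operator). Let (X,a) be a symmetric V-category and A a set of V-functors (X,a) → V_s. If C(A) is initial, i.e. a x y = ⨅_{g∈C(A)} hom_s (g x) (g y) for all x,y ∈ X, then A is initial, i.e. a x y = ⨅_{g∈A} hom_s (g x) (g y) for all x,y ∈ X. -/
/-- For a V_s-closure operator C and a set A of V-functors
(X,a) → V_s, if C(A) is initial then A is initial. -/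
theorem closure_initial_implies_initial
    {V : Type*} [CompleteLattice V]
    (ten : V → V → V) (k : V) (hom : V → V → V)
    (ten_comm : ∀ u v : V, ten u v = ten v u)
    (ten_assoc : ∀ u v w : V, ten (ten u v) w = ten u (ten v w))
    (ten_unit : ∀ u : V, ten k u = u)
    (ten_sup : ∀ (u : V) (S : Set V), ten u (sSup S) = ⨆ v ∈ S, ten u v)
    (hom_adj : ∀ u v w : V, ten u v ≤ w ↔ v ≤ hom u w)
    {X : Type*}
    (C : Set (X → V) → Set (X → V))
    (hC_ext : ∀ A, A ⊆ C A)
    (hC_mono : ∀ A B, A ⊆ B → C A ⊆ C B)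
    (hC_idem : ∀ A, C (C A) = C A)
    (hC_fix : ∀ a : X → X → V,
        (∀ x, k ≤ a x x) → (∀ x y z, ten (a x y) (a y z) ≤ a x z) →
        (∀ x y, a x y = a y x) →
        C {f : X → V | ∀ x y, a x y ≤ homs hom (f x) (f y)} =
          {f : X → V | ∀ x y, a x y ≤ homs hom (f x) (f y)})
    (a : X → X → V)
    (ha_refl : ∀ x, k ≤ a x x)
    (ha_trans : ∀ x y z, ten (a x y) (a y z) ≤ a x z)
    (ha_symm : ∀ x y, a x y = a y x)
    (A : Set (X → V))
    (hA : ∀ g ∈ A, ∀ x y, a x y ≤ homs hom (g x) (g y))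
    (hCA_initial : ∀ x y, a x y = ⨅ g ∈ C A, homs hom (g x) (g y)) :
    ∀ x y, a x y = ⨅ g ∈ A, homs hom (g x) (g y) := by
  -- monotonicity of ten
  have ten_mono : ∀ u v v' : V, v ≤ v' → ten u v ≤ ten u v' := by
    intro u v v' h
    have : ten u (sSup {v, v'}) = ⨆ w ∈ ({v, v'} : Set V), ten u w := ten_sup u _
    have hsup : sSup ({v, v'} : Set V) = v' := by
      apply le_antisymm (sSup_le (by rintro w (rfl|rfl) <;> simp [h]))
      exact le_sSup (by simp)
    rw [hsup] at this
    rw [this]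
    exact le_biSup _ (by simp)
  have ten_mono2 : ∀ u u' v : V, u ≤ u' → ten u v ≤ ten u' v := by
    intro u u' v h
    rw [ten_comm u v, ten_comm u' v]; exact ten_mono v u u' h
  have counit : ∀ u v : V, ten u (hom u v) ≤ v := fun u v =>
    (hom_adj u (hom u v) v).2 le_rfl
  -- transitivity of hom
  have hom_trans : ∀ u v w : V, ten (hom u v) (hom v w) ≤ hom u w := by
    intro u v w
    rw [← hom_adj, ← ten_assoc]
    calc ten (ten u (hom u v)) (hom v w) ≤ ten v (hom v w) :=
          ten_mono2 _ _ _ (counit u v)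
      _ ≤ w := counit v w
  have homs_trans : ∀ u v w : V, ten (homs hom u v) (homs hom v w) ≤ homs hom u w := by
    intro u v w
    refine le_inf ?_ ?_
    · exact le_trans (le_trans (ten_mono2 _ _ _ inf_le_left)
        (ten_mono _ _ _ inf_le_left)) (hom_trans u v w)
    · rw [ten_comm]
      exact le_trans (le_trans (ten_mono2 _ _ _ inf_le_right)
        (ten_mono _ _ _ inf_le_right)) (hom_trans w v u)
  have homs_refl : ∀ u : V, k ≤ homs hom u u := by
    intro u
    have : ten u k ≤ u := by rw [ten_comm, ten_unit]
    exact le_inf ((hom_adj u k u).1 this) ((hom_adj u k u).1 this)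
  have homs_symm : ∀ u v : V, homs hom u v = homs hom v u := fun u v => inf_comm _ _
  -- define b
  set b : X → X → V := fun x y => ⨅ g ∈ A, homs hom (g x) (g y) with hb
  have hb_refl : ∀ x, k ≤ b x x := fun x =>
    le_iInf fun g => le_iInf fun _ => homs_refl (g x)
  have hb_trans : ∀ x y z, ten (b x y) (b y z) ≤ b x z := by
    intro x y z
    refine le_iInf fun g => le_iInf fun hg => ?_
    calc ten (b x y) (b y z) ≤ ten (homs hom (g x) (g y)) (homs hom (g y) (g z)) := by
          exact le_trans (ten_mono2 _ _ _ (iInf₂_le g hg)) (ten_mono _ _ _ (iInf₂_le g hg))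
      _ ≤ homs hom (g x) (g z) := homs_trans _ _ _
  have hb_symm : ∀ x y, b x y = b y x := by
    intro x y
    simp only [hb]
    exact iInf_congr fun g => iInf_congr fun _ => homs_symm _ _
  have hsub : A ⊆ {f : X → V | ∀ x y, b x y ≤ homs hom (f x) (f y)} := by
    intro f hf x y
    exact iInf₂_le f hf
  have hclosed := hC_fix b hb_refl hb_trans hb_symm
  have hCAsub : C A ⊆ {f : X → V | ∀ x y, b x y ≤ homs hom (f x) (f y)} := by
    intro f hf
    rw [← hclosed]
    exact hC_mono _ _ hsub hf
  intro x y
  refine le_antisymm (le_iInf fun g => le_iInf fun hg => hA g hg x y) ?_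
  rw [hCA_initial x y]
  exact le_iInf fun g => le_iInf fun hg => hCAsub hg x y
end

section
/- Let V be a commutative unital quantale, X a set, and A a nonempty set of maps X → V that is closed under pointwise binary meet (ψ, φ ∈ A implies the pointwise ψ ⊓ φ ∈ A) and closed under the operation ψ ↦ (y ↦ hom_s(u, ψ y)) for every u ∈ V. Then for every x ∈ X, the family of maps { y ↦ hom_s(ψ x, ψ y) | ψ ∈ A } is codirected in the pointwise order: for all ψ, φ ∈ A there exists γ ∈ A such that hom_s(γ x, γ y) ≤ hom_s(ψ x, ψ y) and hom_s(γ x, γ y) ≤ hom_s(φ x, φ y) for all y ∈ X. -/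
/-- For a nonempty set A of maps X → V closed under pointwise binary
meet and under ψ ↦ hom_s(u, ψ ·), the family { y ↦ hom_s(ψ x, ψ y) | ψ ∈ A } is
codirected, for every x. -/
theorem family_codirected
    {V : Type*} [CompleteLattice V]
    (ten : V → V → V) (k : V) (hom : V → V → V)
    (ten_comm : ∀ u v : V, ten u v = ten v u)
    (ten_assoc : ∀ u v w : V, ten (ten u v) w = ten u (ten v w))
    (ten_unit : ∀ u : V, ten k u = u)
    (ten_sup : ∀ (u : V) (S : Set V), ten u (sSup S) = ⨆ v ∈ S, ten u v)
    (hom_adj : ∀ u v w : V, ten u v ≤ w ↔ v ≤ hom u w)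
    {X : Type*}
    (A : Set (X → V)) (hne : A.Nonempty)
    (hmeet : ∀ f ∈ A, ∀ g ∈ A, (fun y => f y ⊓ g y) ∈ A)
    (hhoms : ∀ u : V, ∀ f ∈ A, (fun y => homs hom u (f y)) ∈ A) :
    ∀ x : X, ∀ ψ ∈ A, ∀ φ ∈ A, ∃ γ ∈ A,
      ∀ y, homs hom (γ x) (γ y) ≤ homs hom (ψ x) (ψ y) ∧
           homs hom (γ x) (γ y) ≤ homs hom (φ x) (φ y) := by
  -- tensor is monotone in the second argument
  have ten_mono : ∀ u a b : V, a ≤ b → ten u a ≤ ten u b := by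
    intro u a b hab
    have h : ten u (sSup {a, b}) = ⨆ v ∈ ({a, b} : Set V), ten u v := ten_sup u _
    have hs : sSup ({a, b} : Set V) = b := by
      rw [sSup_pair, sup_eq_right.mpr hab]
    rw [hs] at h
    calc ten u a ≤ ⨆ v ∈ ({a, b} : Set V), ten u v :=
          le_biSup (fun v => ten u v) (by simp)
      _ = ten u b := h.symm
  -- hom k w ≤ w
  have hom_k : ∀ w : V, hom k w ≤ w := by
    intro w
    have := (hom_adj k (hom k w) w).mpr le_rfl
    rwa [ten_unit] at this
  -- k ≤ hom u u
  have k_le : ∀ u : V, k ≤ hom u u := by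
    intro u
    apply (hom_adj u k u).mp
    rw [ten_comm, ten_unit]
  -- hom is antitone in the first argument
  have hom_anti : ∀ u u' w : V, u ≤ u' → hom u' w ≤ hom u w := by
    intro u u' w h
    apply (hom_adj u (hom u' w) w).mp
    calc ten u (hom u' w) = ten (hom u' w) u := ten_comm _ _
      _ ≤ ten (hom u' w) u' := ten_mono _ _ _ h
      _ = ten u' (hom u' w) := ten_comm _ _
      _ ≤ w := (hom_adj u' (hom u' w) w).mpr le_rfl
  intro x ψ hψ φ hφ
  set ψ' : X → V := fun y => homs hom (ψ x) (ψ y) with hψ'def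
  set φ' : X → V := fun y => homs hom (φ x) (φ y) with hφ'def
  have hψ'A : ψ' ∈ A := hhoms (ψ x) ψ hψ
  have hφ'A : φ' ∈ A := hhoms (φ x) φ hφ
  refine ⟨fun y => ψ' y ⊓ φ' y, hmeet ψ' hψ'A φ' hφ'A, ?_⟩
  intro y
  have hkx : k ≤ ψ' x ⊓ φ' x := by
    refine le_inf ?_ ?_ <;> exact le_inf (k_le _) (k_le _)
  have key : homs hom (ψ' x ⊓ φ' x) (ψ' y ⊓ φ' y) ≤ ψ' y ⊓ φ' y := by
    calc homs hom (ψ' x ⊓ φ' x) (ψ' y ⊓ φ' y)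
        ≤ hom (ψ' x ⊓ φ' x) (ψ' y ⊓ φ' y) := inf_le_left
      _ ≤ hom k (ψ' y ⊓ φ' y) := hom_anti _ _ _ hkx
      _ ≤ ψ' y ⊓ φ' y := hom_k _
  exact ⟨key.trans inf_le_left, key.trans inf_le_right⟩
end

section
/- Let V be a commutative unital quantale, (X,a) a finite symmetric V-category, and A ⊆ maps X → V a propositional algebra each of whose elements is a V-functor (X,a) → V_s, and suppose A is initial: a x y = ⨅_{ψ∈A} hom_s (ψ x) (ψ y) for all x,y. Let u ∈ V be such that for every v ∈ V, hom(u,v) is way above v. Then for every V-functor f : (X,a) → V_s there is ψ ∈ A such that u ≤ ⨅_{x∈X} hom (ψ x) (f x) and k ≤ ⨅_{x∈X} hom (f x) (ψ x). -/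
/-- `w` is way above `v`: every nonempty codirected set with infimum below `v`
contains an element below `w`. -/
def WayAbove {V : Type*} [CompleteLattice V] (w v : V) : Prop :=
  ∀ D : Set V, D.Nonempty →
    (∀ a ∈ D, ∀ b ∈ D, ∃ c ∈ D, c ≤ a ∧ c ≤ b) →
    sInf D ≤ v → ∃ d ∈ D, d ≤ w

/-- Main approximation lemma for initial propositional algebras on
finite symmetric V-categories. -/
theorem sw_main_lemma
    {V : Type*} [CompleteLattice V]
    (ten : V → V → V) (k : V) (hom : V → V → V)
    (ten_comm : ∀ u v : V, ten u v = ten v u)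
    (ten_assoc : ∀ u v w : V, ten (ten u v) w = ten u (ten v w))
    (ten_unit : ∀ u : V, ten k u = u)
    (ten_sup : ∀ (u : V) (S : Set V), ten u (sSup S) = ⨆ v ∈ S, ten u v)
    (hom_adj : ∀ u v w : V, ten u v ≤ w ↔ v ≤ hom u w)
    {X : Type*} [Finite X] (a : X → X → V)
    (ha_refl : ∀ x, k ≤ a x x)
    (ha_trans : ∀ x y z, ten (a x y) (a y z) ≤ a x z)
    (ha_symm : ∀ x y, a x y = a y x)
    (A : Set (X → V))
    (hA_top : (fun _ : X => (⊤ : V)) ∈ A)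
    (hA_inf : ∀ f ∈ A, ∀ g ∈ A, (fun x => f x ⊓ g x) ∈ A)
    (hA_sup : ∀ f ∈ A, ∀ g ∈ A, (fun x => f x ⊔ g x) ∈ A)
    (hA_ten : ∀ u : V, ∀ f ∈ A, (fun x => ten u (f x)) ∈ A)
    (hA_homs : ∀ u : V, ∀ f ∈ A, (fun x => homs hom u (f x)) ∈ A)
    (hA_fun : ∀ ψ ∈ A, ∀ x y, a x y ≤ homs hom (ψ x) (ψ y))
    (hinit : ∀ x y, a x y = ⨅ ψ ∈ A, homs hom (ψ x) (ψ y))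
    (u : V) (hu : ∀ v : V, WayAbove (hom u v) v)
    (f : X → V) (hf : ∀ x y, a x y ≤ homs hom (f x) (f y)) :
    ∃ ψ ∈ A, u ≤ (⨅ x, hom (ψ x) (f x)) ∧ k ≤ ⨅ x, hom (f x) (ψ x) := by

  classical
  -- basic consequences of the adjunction
  have ten_mono_r : ∀ p v w : V, v ≤ w → ten p v ≤ ten p w := fun p v w h =>
    (hom_adj p v (ten p w)).mpr (h.trans ((hom_adj p w (ten p w)).mp le_rfl))
  have k_le_hom_self : ∀ w : V, k ≤ hom w w := fun w =>
    (hom_adj w k w).mp (by rw [ten_comm, ten_unit])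
  have k_le_homs_self : ∀ w : V, k ≤ homs hom w w := fun w =>
    le_inf (k_le_hom_self w) (k_le_hom_self w)
  have a_le_hom : ∀ x y, a x y ≤ hom (f x) (f y) := fun x y => (hf x y).trans inf_le_left
  -- closure of A under finite infima of families
  have memInfA : ∀ (x : X) (s : Finset (X → V)), ↑s ⊆ A →
      (fun z => ⨅ φ ∈ s, homs hom (φ x) (φ z)) ∈ A := by
    intro x s
    induction s using Finset.induction_on with
    | empty => intro _; simpa using hA_top
    | @insert φ₀ s hφ₀ ih =>
      intro hsub
      have h1 : (fun z => homs hom (φ₀ x) (φ₀ z)) ∈ A :=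
        hA_homs (φ₀ x) φ₀ (hsub (by simp))
      have h2 := ih (fun φ hφ => hsub (by simp [hφ]))
      have heq : (fun z => ⨅ φ ∈ insert φ₀ s, homs hom (φ x) (φ z))
          = fun z => homs hom (φ₀ x) (φ₀ z) ⊓ ⨅ φ ∈ s, homs hom (φ x) (φ z) :=
        funext fun z => Finset.iInf_insert φ₀ s _
      rw [heq]
      exact hA_inf _ h1 _ h2
  -- the two-point approximation
  have two_point : ∀ x y : X, ∃ ψ ∈ A, f x ≤ ψ x ∧ ten u (ψ y) ≤ f y := by
    intro x y
    set D : Set V :=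
      { v | ∃ s : Finset (X → V), ↑s ⊆ A ∧ v = ⨅ φ ∈ s, homs hom (φ x) (φ y) } with hD
    have hDne : D.Nonempty := ⟨_, ∅, by simp, rfl⟩
    have hDcod : ∀ p ∈ D, ∀ q ∈ D, ∃ c ∈ D, c ≤ p ∧ c ≤ q := by
      rintro p ⟨s, hs, rfl⟩ q ⟨t, ht, rfl⟩
      refine ⟨_, ⟨s ∪ t, ?_, rfl⟩, ?_, ?_⟩
      · intro φ hφ
        rcases Finset.mem_union.mp hφ with h | h
        · exact hs h
        · exact ht h
      · exact biInf_mono fun φ h => Finset.mem_union_left _ h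
      · exact biInf_mono fun φ h => Finset.mem_union_right _ h
    have hDinf : sInf D ≤ a x y := by
      rw [hinit]
      refine le_iInf₂ fun φ hφ => ?_
      refine sInf_le ⟨{φ}, by simpa using hφ, ?_⟩
      simp
    obtain ⟨d, ⟨s, hsA, rfl⟩, hd⟩ := hu (a x y) D hDne hDcod hDinf
    refine ⟨fun z => ten (f x) (⨅ φ ∈ s, homs hom (φ x) (φ z)),
      hA_ten (f x) _ (memInfA x s hsA), ?_, ?_⟩
    · show f x ≤ ten (f x) (⨅ φ ∈ s, homs hom (φ x) (φ x))
      calc f x = ten (f x) k := by rw [ten_comm, ten_unit]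
        _ ≤ ten (f x) (⨅ φ ∈ s, homs hom (φ x) (φ x)) :=
          ten_mono_r _ _ _ (le_iInf₂ fun φ _ => k_le_homs_self _)
    · have h1 : ten u (⨅ φ ∈ s, homs hom (φ x) (φ y)) ≤ a x y :=
        (hom_adj u _ (a x y)).mpr hd
      calc ten u (ten (f x) (⨅ φ ∈ s, homs hom (φ x) (φ y)))
          = ten (f x) (ten u (⨅ φ ∈ s, homs hom (φ x) (φ y))) := by
            rw [← ten_assoc, ten_comm u (f x), ten_assoc]
        _ ≤ ten (f x) (a x y) := ten_mono_r _ _ _ h1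
        _ ≤ f y := (hom_adj (f x) (a x y) (f y)).mpr (a_le_hom x y)
  -- combine over all points
  cases isEmpty_or_nonempty X with
  | inl h =>
    exact ⟨_, hA_top, by simp, by simp⟩
  | inr h =>
    have : Fintype X := Fintype.ofFinite X
    choose Ψ hΨA hΨ1 hΨ2 using two_point
    -- closure of A under finite infima / nonempty finite suprema indexed by X
    have A_binf : ∀ (s : Finset X) (g : X → X → V), (∀ i ∈ s, g i ∈ A) →
        (fun z => ⨅ i ∈ s, g i z) ∈ A := by
      intro s
      induction s using Finset.induction_on with
      | empty => intro g _; simpa using hA_top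
      | @insert i₀ s hi₀ ih =>
        intro g hg
        have h1 : g i₀ ∈ A := hg i₀ (by simp)
        have h2 := ih g (fun i hi => hg i (by simp [hi]))
        have heq : (fun z => ⨅ i ∈ insert i₀ s, g i z)
            = fun z => g i₀ z ⊓ ⨅ i ∈ s, g i z := funext fun z => Finset.iInf_insert i₀ s _
        rw [heq]
        exact hA_inf _ h1 _ h2
    have A_bsup : ∀ (s : Finset X), s.Nonempty → ∀ (g : X → X → V), (∀ i ∈ s, g i ∈ A) →
        (fun z => ⨆ i ∈ s, g i z) ∈ A := by
      intro s hs
      induction hs using Finset.Nonempty.cons_induction with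
      | singleton i => intro g hg; simpa using hg i (by simp)
      | cons i₀ s hi₀ hs ih =>
        intro g hg
        have h1 : g i₀ ∈ A := hg i₀ (by simp)
        have h2 := ih g (fun i hi => hg i (by simp [hi]))
        have heq : (fun z => ⨆ i ∈ Finset.cons i₀ s hi₀, g i z)
            = fun z => g i₀ z ⊔ ⨆ i ∈ s, g i z := funext fun z => by
          rw [Finset.cons_eq_insert, Finset.iSup_insert]
        rw [heq]
        exact hA_sup _ h1 _ h2
    set g : X → X → V := fun x z => ⨅ y ∈ Finset.univ, Ψ x y z with hg
    have hgA : ∀ x, g x ∈ A := fun x => A_binf Finset.univ (Ψ x) (fun y _ => hΨA x y)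
    set ψ : X → V := fun z => ⨆ x ∈ Finset.univ, g x z with hψ
    have hψA : ψ ∈ A := A_bsup Finset.univ Finset.univ_nonempty g (fun x _ => hgA x)
    refine ⟨ψ, hψA, le_iInf fun x₀ => ?_, le_iInf fun x₀ => ?_⟩
    · refine (hom_adj (ψ x₀) u (f x₀)).mp ?_
      rw [ten_comm]
      refine (hom_adj u (ψ x₀) (f x₀)).mpr ?_
      refine iSup₂_le fun x' _ => ?_
      have h1 : g x' x₀ ≤ Ψ x' x₀ x₀ := biInf_le _ (Finset.mem_univ x₀)
      exact h1.trans ((hom_adj u (Ψ x' x₀ x₀) (f x₀)).mp (hΨ2 x' x₀))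
    · refine (hom_adj (f x₀) k (ψ x₀)).mp ?_
      rw [ten_comm, ten_unit]
      have h1 : f x₀ ≤ g x₀ x₀ := le_iInf₂ fun y _ => hΨ1 x₀ y
      exact h1.trans (le_iSup₂ (f := fun x _ => g x x₀) x₀ (Finset.mem_univ x₀))
end

section
/- Let V be a finite commutative unital quantale (the underlying lattice is a finite set), (X,a) a finite symmetric V-category, and A a propositional algebra of maps X → V each of whose elements is a V-functor (X,a) → V_s, and suppose A is initial: a x y = ⨅_{ψ∈A} hom_s (ψ x) (ψ y) for all x,y. Then every V-functor f : (X,a) → V_s belongs to A. -/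
section Quantale

variable {V X : Type*} [CompleteLattice V] {ten hom : V → V → V} {a : X → X → V}

theorem monotone_ten_of_adj (hom_adj : ∀ u v w : V, ten u v ≤ w ↔ v ≤ hom u w) (u : V) :
    Monotone (ten u) :=
  fun v w hvw => (hom_adj u v (ten u w)).2 (hvw.trans ((hom_adj u w (ten u w)).1 le_rfl))

theorem eq_iSup_ten_of_le_hom {k : V}
    (ten_comm : ∀ u v : V, ten u v = ten v u) (ten_unit : ∀ u : V, ten k u = u)
    (hom_adj : ∀ u v w : V, ten u v ≤ w ↔ v ≤ hom u w) (ha_refl : ∀ x, k ≤ a x x)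
    {f : X → V} (hf : ∀ x y, a x y ≤ hom (f x) (f y)) (z : X) :
    f z = ⨆ x, ten (f x) (a x z) := by
  refine le_antisymm ?_ (iSup_le fun x => (hom_adj _ _ _).2 (hf x z))
  calc f z = ten (f z) k := by rw [ten_comm, ten_unit]
    _ ≤ ten (f z) (a z z) := monotone_ten_of_adj hom_adj _ (ha_refl z)
    _ ≤ ⨆ x, ten (f x) (a x z) := le_iSup (fun x => ten (f x) (a x z)) z

theorem representable_mem_of_initial {A : Set (X → V)} (hA : A.Finite) (hA_top : ⊤ ∈ A)
    (hA_inf : InfClosed A) (hA_homs : ∀ u : V, ∀ ψ ∈ A, (fun z => homs hom u (ψ z)) ∈ A)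
    (hinit : ∀ x y, a x y = ⨅ ψ ∈ A, homs hom (ψ x) (ψ y)) (x : X) :
    a x ∈ A := by
  have hrep : a x = ⨅ ψ ∈ A, fun z => homs hom (ψ x) (ψ z) := by
    funext z
    simp only [hinit, iInf_apply]
  rw [hrep]
  exact hA_inf.biInf_mem hA hA_top fun ψ hψ => hA_homs (ψ x) ψ hψ

theorem mem_of_le_hom [Finite X] {k : V}
    (ten_comm : ∀ u v : V, ten u v = ten v u) (ten_unit : ∀ u : V, ten k u = u)
    (hom_adj : ∀ u v w : V, ten u v ≤ w ↔ v ≤ hom u w) (ha_refl : ∀ x, k ≤ a x x)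
    {A : Set (X → V)} (hA_top : ⊤ ∈ A) (hA_sup : SupClosed A)
    (hA_ten : ∀ u : V, ∀ ψ ∈ A, (fun z => ten u (ψ z)) ∈ A) (ha : ∀ x, a x ∈ A)
    {f : X → V} (hf : ∀ x y, a x y ≤ hom (f x) (f y)) :
    f ∈ A := by
  rcases isEmpty_or_nonempty X with hX | hX
  · rwa [Subsingleton.elim f ⊤]
  have hrep : f = ⨆ x, fun z => ten (f x) (a x z) := by
    funext z
    rw [iSup_apply]
    exact eq_iSup_ten_of_le_hom ten_comm ten_unit hom_adj ha_refl hf z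
  rw [hrep]
  exact hA_sup.iSup_mem_of_nonempty fun x => hA_ten (f x) (a x) (ha x)

end Quantale

theorem sw_finite_quantale_general
    {V : Type*} [CompleteLattice V] [Finite V]
    (ten : V → V → V) (k : V) (hom : V → V → V)
    (ten_comm : ∀ u v : V, ten u v = ten v u)
    (ten_unit : ∀ u : V, ten k u = u)
    (hom_adj : ∀ u v w : V, ten u v ≤ w ↔ v ≤ hom u w)
    {X : Type*} [Finite X] (a : X → X → V)
    (ha_refl : ∀ x, k ≤ a x x)
    (A : Set (X → V))
    (hA_top : (fun _ : X => (⊤ : V)) ∈ A)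
    (hA_inf : ∀ f ∈ A, ∀ g ∈ A, (fun x => f x ⊓ g x) ∈ A)
    (hA_sup : ∀ f ∈ A, ∀ g ∈ A, (fun x => f x ⊔ g x) ∈ A)
    (hA_ten : ∀ u : V, ∀ f ∈ A, (fun x => ten u (f x)) ∈ A)
    (hA_homs : ∀ u : V, ∀ f ∈ A, (fun x => homs hom u (f x)) ∈ A)
    (hinit : ∀ x y, a x y = ⨅ ψ ∈ A, homs hom (ψ x) (ψ y))
    (f : X → V) (hf : ∀ x y, a x y ≤ homs hom (f x) (f y)) :
    f ∈ A :=
  have ha : ∀ x, a x ∈ A := representable_mem_of_initial (Set.toFinite A) hA_top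
    (fun f hf g hg => hA_inf f hf g hg) hA_homs hinit
  mem_of_le_hom ten_comm ten_unit hom_adj ha_refl hA_top (fun f hf g hg => hA_sup f hf g hg)
    hA_ten ha fun x y => (hf x y).trans inf_le_left

/-- Over a finite quantale, every initial propositional algebra of
V-functors on a finite symmetric V-category contains every V-functor
(i.e. the identity closure operator characterizes initiality). -/
theorem sw_finite_quantale
    {V : Type*} [CompleteLattice V] [Finite V]
    (ten : V → V → V) (k : V) (hom : V → V → V)
    (ten_comm : ∀ u v : V, ten u v = ten v u)
    (ten_assoc : ∀ u v w : V, ten (ten u v) w = ten u (ten v w))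
    (ten_unit : ∀ u : V, ten k u = u)
    (ten_sup : ∀ (u : V) (S : Set V), ten u (sSup S) = ⨆ v ∈ S, ten u v)
    (hom_adj : ∀ u v w : V, ten u v ≤ w ↔ v ≤ hom u w)
    {X : Type*} [Finite X] (a : X → X → V)
    (ha_refl : ∀ x, k ≤ a x x)
    (ha_trans : ∀ x y z, ten (a x y) (a y z) ≤ a x z)
    (ha_symm : ∀ x y, a x y = a y x)
    (A : Set (X → V))
    (hA_top : (fun _ : X => (⊤ : V)) ∈ A)
    (hA_inf : ∀ f ∈ A, ∀ g ∈ A, (fun x => f x ⊓ g x) ∈ A)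
    (hA_sup : ∀ f ∈ A, ∀ g ∈ A, (fun x => f x ⊔ g x) ∈ A)
    (hA_ten : ∀ u : V, ∀ f ∈ A, (fun x => ten u (f x)) ∈ A)
    (hA_homs : ∀ u : V, ∀ f ∈ A, (fun x => homs hom u (f x)) ∈ A)
    (hA_fun : ∀ ψ ∈ A, ∀ x y, a x y ≤ homs hom (ψ x) (ψ y))
    (hinit : ∀ x y, a x y = ⨅ ψ ∈ A, homs hom (ψ x) (ψ y))
    (f : X → V) (hf : ∀ x y, a x y ≤ homs hom (f x) (f y)) :
    f ∈ A :=
  sw_finite_quantale_general ten k hom ten_comm ten_unit hom_adj a ha_refl A hA_top hA_inf hA_sup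
    hA_ten hA_homs hinit f hf
end

section
/- Let V be a commutative unital quantale satisfying k = ⨆ { u ⊗ u | u ∈ V and for every v ∈ V, hom(u,v) is way above v }. Let (X,a) be a finite symmetric V-category and A a propositional algebra of maps X → V each of whose elements is a V-functor (X,a) → V_s, with A initial: a x y = ⨅_{ψ∈A} hom_s (ψ x) (ψ y) for all x,y. Then every V-functor f : (X,a) → V_s lies in the L-closure of A in V_s^X: k ≤ ⨆_{ψ∈A} ( (⨅_{x∈X} hom_s(ψ x, f x)) ⊗ (⨅_{x∈X} hom_s(f x, ψ x)) ). -/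
/-- Under the decomposition condition on k, the L-closure operator
characterizes initiality on finite symmetric V-categories: every V-functor f lies
in the L-closure of an initial propositional algebra A in V_s^X. -/
theorem sw_L_closure
    {V : Type*} [CompleteLattice V]
    (ten : V → V → V) (k : V) (hom : V → V → V)
    (ten_comm : ∀ u v : V, ten u v = ten v u)
    (ten_assoc : ∀ u v w : V, ten (ten u v) w = ten u (ten v w))
    (ten_unit : ∀ u : V, ten k u = u)
    (ten_sup : ∀ (u : V) (S : Set V), ten u (sSup S) = ⨆ v ∈ S, ten u v)
    (hom_adj : ∀ u v w : V, ten u v ≤ w ↔ v ≤ hom u w)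
    (hk : k = ⨆ u ∈ {u : V | ∀ v : V, WayAbove (hom u v) v}, ten u u)
    {X : Type*} [Finite X] (a : X → X → V)
    (ha_refl : ∀ x, k ≤ a x x)
    (ha_trans : ∀ x y z, ten (a x y) (a y z) ≤ a x z)
    (ha_symm : ∀ x y, a x y = a y x)
    (A : Set (X → V))
    (hA_top : (fun _ : X => (⊤ : V)) ∈ A)
    (hA_inf : ∀ f ∈ A, ∀ g ∈ A, (fun x => f x ⊓ g x) ∈ A)
    (hA_sup : ∀ f ∈ A, ∀ g ∈ A, (fun x => f x ⊔ g x) ∈ A)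
    (hA_ten : ∀ u : V, ∀ f ∈ A, (fun x => ten u (f x)) ∈ A)
    (hA_homs : ∀ u : V, ∀ f ∈ A, (fun x => homs hom u (f x)) ∈ A)
    (hA_fun : ∀ ψ ∈ A, ∀ x y, a x y ≤ homs hom (ψ x) (ψ y))
    (hinit : ∀ x y, a x y = ⨅ ψ ∈ A, homs hom (ψ x) (ψ y))
    (f : X → V) (hf : ∀ x y, a x y ≤ homs hom (f x) (f y)) :
    k ≤ ⨆ ψ ∈ A,
      ten (⨅ x, homs hom (ψ x) (f x)) (⨅ x, homs hom (f x) (ψ x)) := by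
  classical
  -- monotonicity of ten from the adjunction
  have mono2 : ∀ u v w : V, v ≤ w → ten u v ≤ ten u w := by
    intro u v w h
    exact (hom_adj u v (ten u w)).mpr (h.trans ((hom_adj u w (ten u w)).mp le_rfl))
  have mono1 : ∀ u v w : V, u ≤ v → ten u w ≤ ten v w := by
    intro u v w h
    rw [ten_comm u w, ten_comm v w]; exact mono2 w u v h
  rw [hk]
  refine iSup₂_le fun u hu => ?_
  have hu : ∀ v : V, WayAbove (hom u v) v := hu
  -- every such u satisfies ten u v ≤ v, hence u ≤ k
  have huv : ∀ v : V, ten u v ≤ v := by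
    intro v
    obtain ⟨d, hd, hdle⟩ := hu v {v} ⟨v, rfl⟩
      (fun a ha b hb => ⟨v, rfl, by simp_all, by simp_all⟩) (by simp)
    rw [Set.mem_singleton_iff.mp hd] at hdle
    exact (hom_adj u v v).mpr hdle
  have u_le_k : u ≤ k := by
    have := huv k; rwa [ten_comm, ten_unit] at this
  rcases isEmpty_or_nonempty X with hX | hX
  · refine le_iSup₂_of_le (fun _ => (⊤ : V)) hA_top ?_
    exact le_trans (mono1 _ _ _ (le_iInf fun x => isEmptyElim x))
      (mono2 _ _ _ (le_iInf fun x => isEmptyElim x))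
  · have : Fintype X := Fintype.ofFinite X
    -- closure of A under finite infima of families
    have memInf : ∀ (F : Finset (X → V)) (g : (X → V) → X → V),
        (∀ ψ ∈ F, g ψ ∈ A) → (fun z => ⨅ ψ ∈ F, g ψ z) ∈ A := by
      intro F
      induction F using Finset.cons_induction with
      | empty => intro g _; simpa using hA_top
      | cons c s hc ih =>
        intro g hg
        have h1 : (fun z => ⨅ ψ ∈ Finset.cons c s hc, g ψ z)
            = fun z => g c z ⊓ ⨅ ψ ∈ s, g ψ z := by
          funext z; rw [Finset.cons_eq_insert, Finset.iInf_insert]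
        rw [h1]
        exact hA_inf _ (hg c (Finset.mem_cons_self c s)) _
          (ih _ fun ψ hψ => hg ψ (Finset.mem_cons_of_mem hψ))
    -- closure of A under nonempty finite suprema of families
    have memSup : ∀ (F : Finset X), F.Nonempty → ∀ g : X → X → V,
        (∀ i ∈ F, g i ∈ A) → (fun z => ⨆ i ∈ F, g i z) ∈ A := by
      intro F hF
      induction hF using Finset.Nonempty.cons_induction with
      | singleton c =>
        intro g hg
        have h1 : (fun z => ⨆ i ∈ ({c} : Finset X), g i z) = g c := by
          funext z; simp
        rw [h1]; exact hg c (Finset.mem_singleton_self c)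
      | cons c s hc hs ih =>
        intro g hg
        have h1 : (fun z => ⨆ i ∈ Finset.cons c s hc, g i z)
            = fun z => g c z ⊔ ⨆ i ∈ s, g i z := by
          funext z; rw [Finset.cons_eq_insert, Finset.iSup_insert]
        rw [h1]
        exact hA_sup _ (hg c (Finset.mem_cons_self c s)) _
          (ih _ fun i hi => hg i (Finset.mem_cons_of_mem hi))
    -- for each pair (x,z) choose a finite subfamily approximating a x z within u
    have key : ∀ x z : X, ∃ F : Finset (X → V), (∀ ψ ∈ F, ψ ∈ A) ∧
        (⨅ ψ ∈ F, homs hom (ψ x) (ψ z)) ≤ hom u (a x z) := by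
      intro x z
      set D : Set V := {v | ∃ F : Finset (X → V), (∀ ψ ∈ F, ψ ∈ A) ∧
        v = ⨅ ψ ∈ F, homs hom (ψ x) (ψ z)} with hD
      have hne : D.Nonempty := ⟨_, ∅, by simp, rfl⟩
      have hcod : ∀ p ∈ D, ∀ q ∈ D, ∃ c ∈ D, c ≤ p ∧ c ≤ q := by
        rintro p ⟨F₁, hF₁, rfl⟩ q ⟨F₂, hF₂, rfl⟩
        refine ⟨_, ⟨F₁ ∪ F₂, fun ψ hψ => ?_, rfl⟩, ?_, ?_⟩
        · rcases Finset.mem_union.mp hψ with h | h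
          exacts [hF₁ ψ h, hF₂ ψ h]
        · exact biInf_mono fun ψ hψ => Finset.mem_union_left _ hψ
        · exact biInf_mono fun ψ hψ => Finset.mem_union_right _ hψ
      have hinf : sInf D ≤ a x z := by
        rw [hinit]
        refine le_iInf₂ fun ψ hψ => sInf_le ⟨{ψ}, by simpa using hψ, by simp⟩
      obtain ⟨d, ⟨F, hFA, rfl⟩, hdle⟩ := hu (a x z) D hne hcod hinf
      exact ⟨F, hFA, hdle⟩
    choose Fc hFcA hFcle using key
    set Ft : Finset (X → V) :=
      (Finset.univ : Finset (X × X)).biUnion (fun p => Fc p.1 p.2) with hFt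
    have hFtA : ∀ ψ ∈ Ft, ψ ∈ A := by
      intro ψ hψ
      obtain ⟨p, _, hp⟩ := Finset.mem_biUnion.mp hψ
      exact hFcA p.1 p.2 ψ hp
    set d : X → X → V := fun x z => ⨅ ψ ∈ Ft, homs hom (ψ x) (ψ z) with hd
    have hd_le : ∀ x z, ten u (d x z) ≤ a x z := by
      intro x z
      refine (hom_adj u (d x z) (a x z)).mpr (le_trans ?_ (hFcle x z))
      exact biInf_mono fun ψ hψ => Finset.mem_biUnion.mpr ⟨(x, z), Finset.mem_univ _, hψ⟩
    have hd_ge : ∀ x z, a x z ≤ d x z := by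
      intro x z
      refine le_iInf₂ fun ψ hψ => ?_
      rw [hinit]
      exact iInf₂_le ψ (hFtA ψ hψ)
    have hd_mem : ∀ x : X, (fun z => d x z) ∈ A := by
      intro x
      exact memInf Ft (fun ψ z => homs hom (ψ x) (ψ z))
        (fun ψ hψ => hA_homs (ψ x) ψ (hFtA ψ hψ))
    set g : X → V := fun z => ⨆ x : X, ten (f x) (d x z) with hg
    have hg_mem : g ∈ A := by
      have h1 : (fun z => ⨆ x ∈ (Finset.univ : Finset X), ten (f x) (d x z)) ∈ A :=
        memSup Finset.univ Finset.univ_nonempty (fun x z => ten (f x) (d x z))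
          (fun x _ => hA_ten (f x) _ (hd_mem x))
      have h2 : (fun z => ⨆ x ∈ (Finset.univ : Finset X), ten (f x) (d x z)) = g := by
        funext z; simp [hg]
      rwa [h2] at h1
    -- f ≤ g
    have hfg : ∀ z, f z ≤ g z := by
      intro z
      have h1 : f z ≤ ten (f z) (d z z) := by
        have : k ≤ d z z := (ha_refl z).trans (hd_ge z z)
        calc f z = ten k (f z) := (ten_unit _).symm
          _ = ten (f z) k := ten_comm _ _
          _ ≤ ten (f z) (d z z) := mono2 _ _ _ this
      exact h1.trans (le_iSup (fun x => ten (f x) (d x z)) z)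
    -- ten u (g z) ≤ f z
    have hgf : ∀ z, ten u (g z) ≤ f z := by
      intro z
      refine (hom_adj u (g z) (f z)).mpr (iSup_le fun x => (hom_adj u _ (f z)).mp ?_)
      have h1 : ten u (ten (f x) (d x z)) = ten (f x) (ten u (d x z)) := by
        rw [ten_comm u _, ten_assoc, ten_comm (d x z) u]
      rw [h1]
      refine le_trans (mono2 _ _ _ (hd_le x z)) ?_
      exact (hom_adj (f x) (a x z) (f z)).mpr ((hf x z).trans inf_le_left)
    have h1 : u ≤ ⨅ z, homs hom (g z) (f z) := by
      refine le_iInf fun z => le_inf ?_ ?_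
      · exact (hom_adj (g z) u (f z)).mp (by rw [ten_comm]; exact hgf z)
      · refine (hom_adj (f z) u (g z)).mp ?_
        calc ten (f z) u ≤ ten (f z) k := mono2 _ _ _ u_le_k
          _ = f z := by rw [ten_comm, ten_unit]
          _ ≤ g z := hfg z
    have h2 : u ≤ ⨅ z, homs hom (f z) (g z) := by
      refine le_iInf fun z => le_inf ?_ ?_
      · refine (hom_adj (f z) u (g z)).mp ?_
        calc ten (f z) u ≤ ten (f z) k := mono2 _ _ _ u_le_k
          _ = f z := by rw [ten_comm, ten_unit]
          _ ≤ g z := hfg z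
      · exact (hom_adj (g z) u (f z)).mp (by rw [ten_comm]; exact hgf z)
    refine le_iSup₂_of_le g hg_mem ?_
    exact le_trans (mono1 _ _ _ h1) (mono2 _ _ _ h2)
end

section
/- Let V be a commutative unital quantale such that for every u ∈ V the map u ⊗ - preserves infima of nonempty codirected (downward-directed) subsets of V. Let (X,a) be a symmetric V-category and A a nonempty set of V-functors (X,a) → V_s that is closed under pointwise binary meet and under ψ ↦ (y ↦ hom_s(u, ψ y)) for every u ∈ V, and suppose A is initial: a x y = ⨅_{ψ∈A} hom_s (ψ x) (ψ y) for all x,y. Then for every V-functor f : (X,a) → V_s and every y ∈ X: f y = ⨆_{x∈X} ⨅_{ψ∈A} ( f x ⊗ hom_s(ψ x, ψ y) ). -/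
/-- If the tensor preserves codirected infima, then every V-functor f
on a symmetric V-category with an initial family A satisfies the sup-inf
decomposition formula. -/
theorem vfunctor_sup_inf_formula
    {V : Type*} [CompleteLattice V]
    (ten : V → V → V) (k : V) (hom : V → V → V)
    (ten_comm : ∀ u v : V, ten u v = ten v u)
    (ten_assoc : ∀ u v w : V, ten (ten u v) w = ten u (ten v w))
    (ten_unit : ∀ u : V, ten k u = u)
    (ten_sup : ∀ (u : V) (S : Set V), ten u (sSup S) = ⨆ v ∈ S, ten u v)
    (hom_adj : ∀ u v w : V, ten u v ≤ w ↔ v ≤ hom u w)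
    (ten_cinf : ∀ (u : V) (D : Set V), D.Nonempty →
        (∀ a ∈ D, ∀ b ∈ D, ∃ c ∈ D, c ≤ a ∧ c ≤ b) →
        ten u (sInf D) = ⨅ v ∈ D, ten u v)
    {X : Type*} (a : X → X → V)
    (ha_refl : ∀ x, k ≤ a x x)
    (ha_trans : ∀ x y z, ten (a x y) (a y z) ≤ a x z)
    (ha_symm : ∀ x y, a x y = a y x)
    (A : Set (X → V)) (hne : A.Nonempty)
    (hA_fun : ∀ ψ ∈ A, ∀ x y, a x y ≤ homs hom (ψ x) (ψ y))
    (hmeet : ∀ f ∈ A, ∀ g ∈ A, (fun y => f y ⊓ g y) ∈ A)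
    (hhoms : ∀ u : V, ∀ f ∈ A, (fun y => homs hom u (f y)) ∈ A)
    (hinit : ∀ x y, a x y = ⨅ ψ ∈ A, homs hom (ψ x) (ψ y))
    (f : X → V) (hf : ∀ x y, a x y ≤ homs hom (f x) (f y)) :
    ∀ y : X, f y = ⨆ x : X, ⨅ ψ ∈ A, ten (f x) (homs hom (ψ x) (ψ y)) := by

  have mono : ∀ u v w : V, v ≤ w → ten u v ≤ ten u w := by
    intro u v w h
    exact (hom_adj u v (ten u w)).mpr (h.trans ((hom_adj u w (ten u w)).mp le_rfl))
  have hk : ∀ u : V, k ≤ homs hom u u := by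
    intro u
    have h1 : ten u k ≤ u := by rw [ten_comm, ten_unit]
    exact le_inf ((hom_adj u k u).mp h1) ((hom_adj u k u).mp h1)
  intro y
  apply le_antisymm
  · apply le_iSup_of_le y
    apply le_iInf₂
    intro ψ hψ
    calc f y = ten (f y) k := by rw [ten_comm, ten_unit]
      _ ≤ ten (f y) (homs hom (ψ y) (ψ y)) := mono _ _ _ (hk _)
  · apply iSup_le
    intro x
    set D : Set V := (fun ψ : X → V => homs hom (ψ x) (ψ y)) '' A with hD
    have hDne : D.Nonempty := hne.image _
    have hDdir : ∀ p ∈ D, ∀ q ∈ D, ∃ c ∈ D, c ≤ p ∧ c ≤ q := by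
      rintro _ ⟨ψ, hψ, rfl⟩ _ ⟨φ, hφ, rfl⟩
      set χ : X → V := fun z => homs hom (ψ x) (ψ z) ⊓ homs hom (φ x) (φ z) with hχ
      have hχA : χ ∈ A := hmeet _ (hhoms (ψ x) ψ hψ) _ (hhoms (φ x) φ hφ)
      have hkx : k ≤ χ x := le_inf (hk _) (hk _)
      have h1 : ten (χ x) (hom (χ x) (χ y)) ≤ χ y := (hom_adj _ _ _).mpr le_rfl
      have h2 : homs hom (χ x) (χ y) ≤ χ y := by
        refine le_trans inf_le_left ?_
        calc hom (χ x) (χ y) = ten k (hom (χ x) (χ y)) := (ten_unit _).symm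
          _ ≤ ten (χ x) (hom (χ x) (χ y)) := by
              rw [ten_comm k, ten_comm (χ x)]; exact mono _ _ _ hkx
          _ ≤ χ y := h1
      exact ⟨homs hom (χ x) (χ y), ⟨χ, hχA, rfl⟩,
        h2.trans inf_le_left, h2.trans inf_le_right⟩
    have e1 : (⨅ ψ ∈ A, ten (f x) (homs hom (ψ x) (ψ y))) = ⨅ d ∈ D, ten (f x) d := by
      rw [hD, iInf_image]
    have e2 : sInf D = a x y := by
      rw [hD, sInf_image, ← hinit]
    calc (⨅ ψ ∈ A, ten (f x) (homs hom (ψ x) (ψ y))) = ⨅ d ∈ D, ten (f x) d := e1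
      _ = ten (f x) (sInf D) := (ten_cinf (f x) D hDne hDdir).symm
      _ = ten (f x) (a x y) := by rw [e2]
      _ ≤ f y := (hom_adj _ _ _).mpr ((hf x y).trans inf_le_left)
end

section
/- Let V be a commutative unital quantale such that for every u ∈ V the map u ⊗ - preserves infima of nonempty codirected (downward-directed) subsets of V. Let (X,a) be a finite symmetric V-category and A a propositional algebra of maps X → V each of whose elements is a V-functor (X,a) → V_s, with A initial: a x y = ⨅_{ψ∈A} hom_s (ψ x) (ψ y) for all x,y. Then every V-functor f : (X,a) → V_s lies in the closure of A under codirected infima followed by finite suprema: there exists a family (D_x)_{x∈X} of nonempty codirected subsets of A such that f y = ⨆_{x∈X} ⨅_{g∈D_x} g y for every y ∈ X. -/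
/-- If the tensor preserves codirected infima, then on a finite
symmetric V-category every V-functor lies in the closure of an initial
propositional algebra A under codirected infima followed by finite suprema. -/
theorem sw_cinf_sup
    {V : Type*} [CompleteLattice V]
    (ten : V → V → V) (k : V) (hom : V → V → V)
    (ten_comm : ∀ u v : V, ten u v = ten v u)
    (ten_assoc : ∀ u v w : V, ten (ten u v) w = ten u (ten v w))
    (ten_unit : ∀ u : V, ten k u = u)
    (ten_sup : ∀ (u : V) (S : Set V), ten u (sSup S) = ⨆ v ∈ S, ten u v)
    (hom_adj : ∀ u v w : V, ten u v ≤ w ↔ v ≤ hom u w)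
    (ten_cinf : ∀ (u : V) (D : Set V), D.Nonempty →
        (∀ a ∈ D, ∀ b ∈ D, ∃ c ∈ D, c ≤ a ∧ c ≤ b) →
        ten u (sInf D) = ⨅ v ∈ D, ten u v)
    {X : Type*} [Finite X] (a : X → X → V)
    (ha_refl : ∀ x, k ≤ a x x)
    (ha_trans : ∀ x y z, ten (a x y) (a y z) ≤ a x z)
    (ha_symm : ∀ x y, a x y = a y x)
    (A : Set (X → V))
    (hA_top : (fun _ : X => (⊤ : V)) ∈ A)
    (hA_inf : ∀ f ∈ A, ∀ g ∈ A, (fun x => f x ⊓ g x) ∈ A)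
    (hA_sup : ∀ f ∈ A, ∀ g ∈ A, (fun x => f x ⊔ g x) ∈ A)
    (hA_ten : ∀ u : V, ∀ f ∈ A, (fun x => ten u (f x)) ∈ A)
    (hA_homs : ∀ u : V, ∀ f ∈ A, (fun x => homs hom u (f x)) ∈ A)
    (hA_fun : ∀ ψ ∈ A, ∀ x y, a x y ≤ homs hom (ψ x) (ψ y))
    (hinit : ∀ x y, a x y = ⨅ ψ ∈ A, homs hom (ψ x) (ψ y))
    (f : X → V) (hf : ∀ x y, a x y ≤ homs hom (f x) (f y)) :
    ∃ D : X → Set (X → V),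
      (∀ x : X, D x ⊆ A ∧ (D x).Nonempty ∧
        (∀ g ∈ D x, ∀ h ∈ D x, ∃ e ∈ D x, (∀ y, e y ≤ g y) ∧ (∀ y, e y ≤ h y))) ∧
      (∀ y : X, f y = ⨆ x : X, ⨅ g ∈ D x, g y) := by

  -- basic quantale facts
  have ten_mono : ∀ (u : V) {v w : V}, v ≤ w → ten u v ≤ ten u w := by
    intro u v w hvw
    have h1 : w ≤ hom u (ten u w) := (hom_adj u w (ten u w)).1 le_rfl
    exact (hom_adj u v (ten u w)).2 (hvw.trans h1)
  have homs_le : ∀ u v : V, homs hom u v ≤ hom u v := fun u v => inf_le_left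
  have k_le_homs : ∀ u : V, k ≤ homs hom u u := by
    intro u
    have : k ≤ hom u u := (hom_adj u k u).1 (by rw [ten_comm, ten_unit])
    exact le_inf this this
  -- the codirected sets
  set E : X → Set (X → V) :=
    fun x => {g | g ∈ A ∧ k ≤ g x ∧ ∀ y, a x y ≤ g y} with hE
  have hEinf : ∀ x y, (⨅ g ∈ E x, g y) = a x y := by
    intro x y
    apply le_antisymm
    · rw [hinit]
      refine le_iInf₂ fun ψ hψ => ?_
      have hmem : (fun z => homs hom (ψ x) (ψ z)) ∈ E x :=
        ⟨hA_homs (ψ x) ψ hψ, k_le_homs (ψ x), fun z => hA_fun ψ hψ x z⟩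
      exact iInf₂_le_of_le _ hmem le_rfl
    · exact le_iInf₂ fun g hg => hg.2.2 y
  refine ⟨fun x => (fun g => fun y => ten (f x) (g y)) '' E x, ?_, ?_⟩
  · intro x
    refine ⟨?_, ?_, ?_⟩
    · rintro _ ⟨g, hg, rfl⟩
      exact hA_ten (f x) g hg.1
    · exact ⟨_, ⟨fun _ => ⊤, ⟨hA_top, le_top, fun _ => le_top⟩, rfl⟩⟩
    · rintro _ ⟨g, hg, rfl⟩ _ ⟨h, hh, rfl⟩
      have hmem : (fun y => g y ⊓ h y) ∈ E x :=
        ⟨hA_inf g hg.1 h hh.1, le_inf hg.2.1 hh.2.1,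
          fun y => le_inf (hg.2.2 y) (hh.2.2 y)⟩
      exact ⟨_, ⟨_, hmem, rfl⟩,
        fun y => ten_mono (f x) inf_le_left, fun y => ten_mono (f x) inf_le_right⟩
  · intro y
    have key : ∀ x, (⨅ g ∈ (fun g => fun y => ten (f x) (g y)) '' E x, g y)
        = ten (f x) (a x y) := by
      intro x
      have hTne : ((fun g : X → V => g y) '' E x).Nonempty :=
        ⟨_, ⟨fun _ => ⊤, ⟨hA_top, le_top, fun _ => le_top⟩, rfl⟩⟩
      have hTcd : ∀ u ∈ (fun g : X → V => g y) '' E x,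
          ∀ v ∈ (fun g : X → V => g y) '' E x,
          ∃ c ∈ (fun g : X → V => g y) '' E x, c ≤ u ∧ c ≤ v := by
        rintro _ ⟨g, hg, rfl⟩ _ ⟨h, hh, rfl⟩
        have hmem : (fun z => g z ⊓ h z) ∈ E x :=
          ⟨hA_inf g hg.1 h hh.1, le_inf hg.2.1 hh.2.1,
            fun z => le_inf (hg.2.2 z) (hh.2.2 z)⟩
        exact ⟨_, ⟨_, hmem, rfl⟩, inf_le_left, inf_le_right⟩
      have h1 := ten_cinf (f x) ((fun g : X → V => g y) '' E x) hTne hTcd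
      have h2 : sInf ((fun g : X → V => g y) '' E x) = a x y := by
        rw [sInf_image]
        exact hEinf x y
      rw [h2] at h1
      rw [h1, iInf_image, iInf_image]
    calc f y = ⨆ x, ten (f x) (a x y) := by
          apply le_antisymm
          · have : f y ≤ ten (f y) (a y y) := by
              have := ten_mono (f y) (ha_refl y)
              rwa [ten_comm (f y) k, ten_unit] at this
            exact le_iSup_of_le y this
          · refine iSup_le fun x => ?_
            have h1 : a x y ≤ hom (f x) (f y) := (hf x y).trans (homs_le _ _)
            exact (hom_adj (f x) (a x y) (f y)).2 h1
      _ = ⨆ x, ⨅ g ∈ (fun g => fun y => ten (f x) (g y)) '' E x, g y := by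
          exact iSup_congr fun x => (key x).symm
end

section
/- Let V be a commutative unital quantale whose underlying lattice is completely distributive and such that for every u ∈ V the map u ⊗ - preserves infima of nonempty codirected (downward-directed) subsets of V. Let (X,a) be a finite symmetric V-category and A a propositional algebra of maps X → V each of whose elements is a V-functor (X,a) → V_s, with A initial: a x y = ⨅_{ψ∈A} hom_s (ψ x) (ψ y) for all x,y. Then every V-functor f : (X,a) → V_s is a pointwise infimum of elements of A: there exists S ⊆ A such that f y = ⨅_{g∈S} g y for every y ∈ X. -/
/-- Over a completely distributive quantale whose tensor preserves
codirected infima, every V-functor on a finite symmetric V-category is a pointwise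
infimum of elements of an initial propositional algebra A. -/
theorem sw_inf_closure
    {V : Type*} [CompletelyDistribLattice V]
    (ten : V → V → V) (k : V) (hom : V → V → V)
    (ten_comm : ∀ u v : V, ten u v = ten v u)
    (ten_assoc : ∀ u v w : V, ten (ten u v) w = ten u (ten v w))
    (ten_unit : ∀ u : V, ten k u = u)
    (ten_sup : ∀ (u : V) (S : Set V), ten u (sSup S) = ⨆ v ∈ S, ten u v)
    (hom_adj : ∀ u v w : V, ten u v ≤ w ↔ v ≤ hom u w)
    (ten_cinf : ∀ (u : V) (D : Set V), D.Nonempty →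
        (∀ a ∈ D, ∀ b ∈ D, ∃ c ∈ D, c ≤ a ∧ c ≤ b) →
        ten u (sInf D) = ⨅ v ∈ D, ten u v)
    {X : Type*} [Finite X] (a : X → X → V)
    (ha_refl : ∀ x, k ≤ a x x)
    (ha_trans : ∀ x y z, ten (a x y) (a y z) ≤ a x z)
    (ha_symm : ∀ x y, a x y = a y x)
    (A : Set (X → V))
    (hA_top : (fun _ : X => (⊤ : V)) ∈ A)
    (hA_inf : ∀ f ∈ A, ∀ g ∈ A, (fun x => f x ⊓ g x) ∈ A)
    (hA_sup : ∀ f ∈ A, ∀ g ∈ A, (fun x => f x ⊔ g x) ∈ A)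
    (hA_ten : ∀ u : V, ∀ f ∈ A, (fun x => ten u (f x)) ∈ A)
    (hA_homs : ∀ u : V, ∀ f ∈ A, (fun x => homs hom u (f x)) ∈ A)
    (hA_fun : ∀ ψ ∈ A, ∀ x y, a x y ≤ homs hom (ψ x) (ψ y))
    (hinit : ∀ x y, a x y = ⨅ ψ ∈ A, homs hom (ψ x) (ψ y))
    (f : X → V) (hf : ∀ x y, a x y ≤ homs hom (f x) (f y)) :
    ∃ S ⊆ A, ∀ y : X, f y = ⨅ g ∈ S, g y := by
  classical
  have ten_mono : ∀ (u : V) {v w : V}, v ≤ w → ten u v ≤ ten u w := by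
    intro u v w hvw
    exact (hom_adj u v (ten u w)).mpr (hvw.trans ((hom_adj u w (ten u w)).mp le_rfl))
  have ten_counit : ∀ u w : V, ten u (hom u w) ≤ w := fun u w =>
    (hom_adj u (hom u w) w).mpr le_rfl
  have ten_k : ∀ u : V, ten u k = u := fun u => by rw [ten_comm, ten_unit]
  have key1 : ∀ y z, ten (f y) (a y z) ≤ f z := by
    intro y z
    have h : a y z ≤ hom (f y) (f z) := (hf y z).trans inf_le_left
    exact (ten_mono _ h).trans (ten_counit _ _)
  rcases isEmpty_or_nonempty X with hX | hX
  · exact ⟨∅, Set.empty_subset A, fun y => (hX.false y).elim⟩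
  have : Fintype X := Fintype.ofFinite X
  -- finite infima of homs-translates stay in A
  have inf_mem : ∀ (s : Finset (X → V)), (∀ ψ ∈ s, ψ ∈ A) → ∀ y : X,
      (fun w => s.inf (fun ψ => homs hom (ψ y) (ψ w))) ∈ A := by
    intro s
    induction s using Finset.induction_on with
    | empty => intro _ y; simpa using hA_top
    | @insert ψ s hψs ih =>
      intro hmem y
      have h1 : (fun w => homs hom (ψ y) (ψ w)) ∈ A :=
        hA_homs (ψ y) ψ (hmem ψ (Finset.mem_insert_self ψ s))
      have h2 := ih (fun φ hφ => hmem φ (Finset.mem_insert_of_mem hφ)) y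
      have h3 := hA_inf _ h1 _ h2
      simpa [Finset.inf_insert] using h3
  -- finite suprema of A-elements stay in A
  have sup_mem : ∀ (s : Finset X) (hs : s.Nonempty) (g : X → X → V),
      (∀ y ∈ s, g y ∈ A) → (fun w => s.sup' hs (fun y => g y w)) ∈ A := by
    intro s hs
    induction hs using Finset.Nonempty.cons_induction with
    | singleton b => intro g hg; simpa using hg b (by simp)
    | cons b t hb ht ih =>
      intro g hg
      have h1 := hg b (by simp)
      have h2 := ih g (fun y hy => hg y (by simp [hy]))
      have h3 := hA_sup _ h1 _ h2
      have he : (fun w => (Finset.cons b t hb).sup' (Finset.cons_nonempty hb) fun y => g y w)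
          = fun w => g b w ⊔ t.sup' ht fun y => g y w := by
        funext w
        rw [Finset.sup'_cons]
      rw [he]
      exact h3
  -- index type: finite subsets of A
  let I := {F : Finset (X → V) // ∀ ψ ∈ F, ψ ∈ A}
  have Ine : Nonempty I := ⟨⟨∅, by simp⟩⟩
  let p : X → I → X → V :=
    fun y F w => ten (f y) (F.1.inf (fun ψ => homs hom (ψ y) (ψ w)))
  have p_mem : ∀ y F, (fun w => p y F w) ∈ A := fun y F =>
    hA_ten (f y) _ (inf_mem F.1 F.2 y)
  have p_ge : ∀ y F, f y ≤ p y F y := by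
    intro y F
    have hk : k ≤ F.1.inf (fun ψ => homs hom (ψ y) (ψ y)) :=
      Finset.le_inf (fun ψ hψ => (ha_refl y).trans (hA_fun ψ (F.2 ψ hψ) y y))
    calc f y = ten (f y) k := (ten_k (f y)).symm
      _ ≤ p y F y := ten_mono _ hk
  have p_inf : ∀ y w, (⨅ F : I, p y F w) ≤ f w := by
    intro y w
    set D : Set V :=
      Set.range (fun F : I => F.1.inf (fun ψ => homs hom (ψ y) (ψ w))) with hD
    have hDne : D.Nonempty := Set.range_nonempty _
    have hDdir : ∀ b ∈ D, ∀ c ∈ D, ∃ d ∈ D, d ≤ b ∧ d ≤ c := by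
      rintro _ ⟨F₁, rfl⟩ _ ⟨F₂, rfl⟩
      refine ⟨_, ⟨⟨F₁.1 ∪ F₂.1, ?_⟩, rfl⟩, ?_, ?_⟩
      · intro ψ hψ
        rcases Finset.mem_union.mp hψ with h | h
        · exact F₁.2 ψ h
        · exact F₂.2 ψ h
      · exact Finset.inf_mono Finset.subset_union_left
      · exact Finset.inf_mono Finset.subset_union_right
    have hsInf : sInf D = a y w := by
      apply le_antisymm
      · rw [hinit]
        refine le_iInf₂ (fun ψ hψ => ?_)
        have hmem : ({ψ} : Finset (X → V)).inf (fun φ => homs hom (φ y) (φ w)) ∈ D :=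
          ⟨⟨{ψ}, by simpa using hψ⟩, rfl⟩
        exact (sInf_le hmem).trans (by simp)
      · refine le_sInf ?_
        rintro _ ⟨F, rfl⟩
        exact Finset.le_inf fun ψ hψ => hA_fun ψ (F.2 ψ hψ) y w
    have hten := ten_cinf (f y) D hDne hDdir
    rw [hsInf] at hten
    have h2 : (⨅ F : I, p y F w) = ⨅ v ∈ D, ten (f y) v := by
      rw [hD, iInf_range]
    calc (⨅ F : I, p y F w) = ten (f y) (a y w) := by rw [h2, ← hten]
      _ ≤ f w := key1 y w
  -- the family S
  set S : Set (X → V) :=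
    { g | ∃ c : X → I,
        g = fun w => Finset.univ.sup' Finset.univ_nonempty (fun y => p y (c y) w) } with hS
  have hSA : S ⊆ A := by
    rintro _ ⟨c, rfl⟩
    exact sup_mem Finset.univ Finset.univ_nonempty (fun y => p y (c y))
      (fun y _ => p_mem y (c y))
  have hfS : ∀ g ∈ S, ∀ w, f w ≤ g w := by
    rintro _ ⟨c, rfl⟩ w
    simpa using (p_ge w (c w)).trans
      (Finset.le_sup' (fun y => p y (c y) w) (Finset.mem_univ w))
  refine ⟨S, hSA, fun w => le_antisymm (le_iInf₂ fun g hg => hfS g hg w) ?_⟩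
  have step1 : (⨅ g ∈ S, g w) ≤ ⨅ c : X → I, ⨆ y, p y (c y) w := by
    refine le_iInf fun c => ?_
    have hmem : (fun w => Finset.univ.sup' Finset.univ_nonempty (fun y => p y (c y) w)) ∈ S :=
      ⟨c, rfl⟩
    have he : Finset.univ.sup' Finset.univ_nonempty (fun y => p y (c y) w)
        = ⨆ y, p y (c y) w := by
      rw [Finset.sup'_eq_sup, Finset.sup_univ_eq_iSup]
    have h0 : (⨅ g ∈ S, g w) ≤
        (fun w' => Finset.univ.sup' Finset.univ_nonempty fun y => p y (c y) w') w :=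
      iInf₂_le _ hmem
    exact h0.trans (le_of_eq he)
  have hswap : (⨅ c : X → I, ⨆ y, p y (c y) w) = ⨆ y, ⨅ F : I, p y F w :=
    (iSup_iInf_eq (f := fun y (F : I) => p y F w)).symm
  calc (⨅ g ∈ S, g w) ≤ ⨅ c : X → I, ⨆ y, p y (c y) w := step1
    _ = ⨆ y, ⨅ F : I, p y F w := hswap
    _ ≤ f w := iSup_le fun y => p_inf y w
end

section
/- Let V be a commutative unital quantale and X a set. For a set A of maps X → V define Fun(A) := {f : X → V | for all x,y ∈ X, (⨅_{g∈A} hom_s (g x) (g y)) ≤ hom_s (f x) (f y)}. Then Fun is a closure operator under which the hom-sets of symmetric V-categories are closed: (i) A ⊆ Fun(A); (ii) A ⊆ B implies Fun(A) ⊆ Fun(B); (iii) Fun(Fun(A)) = Fun(A); and (iv) for every symmetric V-category structure a on X, Fun of the set of V-functors (X,a) → V_s equals that set itself. -/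
/-- The operator Fun: the set of maps that are V-functors for the initial structure
induced by A. -/
def FunCl {V : Type*} [CompleteLattice V] (hom : V → V → V) {X : Type*}
    (A : Set (X → V)) : Set (X → V) :=
  {f : X → V | ∀ x y, (⨅ g ∈ A, homs hom (g x) (g y)) ≤ homs hom (f x) (f y)}

/-- Fun is a V_s-closure operator: extensive, monotone, idempotent,
and the hom-sets of symmetric V-categories are fixed points. -/
theorem fun_is_closure_operator
    {V : Type*} [CompleteLattice V]
    (ten : V → V → V) (k : V) (hom : V → V → V)
    (ten_comm : ∀ u v : V, ten u v = ten v u)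
    (ten_assoc : ∀ u v w : V, ten (ten u v) w = ten u (ten v w))
    (ten_unit : ∀ u : V, ten k u = u)
    (ten_sup : ∀ (u : V) (S : Set V), ten u (sSup S) = ⨆ v ∈ S, ten u v)
    (hom_adj : ∀ u v w : V, ten u v ≤ w ↔ v ≤ hom u w)
    {X : Type*} :
    (∀ A : Set (X → V), A ⊆ FunCl hom A) ∧
    (∀ A B : Set (X → V), A ⊆ B → FunCl hom A ⊆ FunCl hom B) ∧
    (∀ A : Set (X → V), FunCl hom (FunCl hom A) = FunCl hom A) ∧
    (∀ a : X → X → V,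
      (∀ x, k ≤ a x x) → (∀ x y z, ten (a x y) (a y z) ≤ a x z) →
      (∀ x y, a x y = a y x) →
      FunCl hom {f : X → V | ∀ x y, a x y ≤ homs hom (f x) (f y)} =
        {f : X → V | ∀ x y, a x y ≤ homs hom (f x) (f y)}) := by
  have ext : ∀ A : Set (X → V), A ⊆ FunCl hom A := by
    intro A f hf x y
    exact iInf₂_le f hf
  have mono : ∀ A B : Set (X → V), A ⊆ B → FunCl hom A ⊆ FunCl hom B := by
    intro A B hAB f hf x y
    refine le_trans ?_ (hf x y)
    exact le_iInf₂ fun g hg => iInf₂_le g (hAB hg)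
  refine ⟨ext, mono, ?_, ?_⟩
  · intro A
    apply le_antisymm
    · intro f hf x y
      refine le_trans ?_ (hf x y)
      exact le_iInf₂ fun g hg => hg x y
    · exact ext _
  · intro a _ _ _
    apply le_antisymm
    · intro f hf x y
      refine le_trans ?_ (hf x y)
      exact le_iInf₂ fun g hg => hg x y
    · exact ext _
end

section
/- Let V be a commutative unital quantale and (X,a) a symmetric V-category. The set of V-functors (X,a) → V_s is closed under arbitrary pointwise infima and under binary pointwise suprema: if (f_i)_{i∈I} is any family of V-functors (X,a) → V_s then x ↦ ⨅_{i∈I} f_i x is a V-functor (X,a) → V_s, and if f, g are V-functors (X,a) → V_s then the pointwise f ⊔ g is a V-functor (X,a) → V_s. -/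
/-- The V-functors (X,a) → V_s are closed under arbitrary pointwise
infima and under binary pointwise suprema. -/
theorem vfunctors_closed_inf_sup
    {V : Type*} [CompleteLattice V]
    (ten : V → V → V) (k : V) (hom : V → V → V)
    (ten_comm : ∀ u v : V, ten u v = ten v u)
    (ten_assoc : ∀ u v w : V, ten (ten u v) w = ten u (ten v w))
    (ten_unit : ∀ u : V, ten k u = u)
    (ten_sup : ∀ (u : V) (S : Set V), ten u (sSup S) = ⨆ v ∈ S, ten u v)
    (hom_adj : ∀ u v w : V, ten u v ≤ w ↔ v ≤ hom u w)
    {X : Type*} (a : X → X → V)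
    (ha_refl : ∀ x, k ≤ a x x)
    (ha_trans : ∀ x y z, ten (a x y) (a y z) ≤ a x z)
    (ha_symm : ∀ x y, a x y = a y x) :
    (∀ {I : Type*} (f : I → X → V),
      (∀ i, ∀ x y, a x y ≤ homs hom (f i x) (f i y)) →
      ∀ x y, a x y ≤ homs hom (⨅ i, f i x) (⨅ i, f i y)) ∧
    (∀ f g : X → V,
      (∀ x y, a x y ≤ homs hom (f x) (f y)) →
      (∀ x y, a x y ≤ homs hom (g x) (g y)) →
      ∀ x y, a x y ≤ homs hom (f x ⊔ g x) (f y ⊔ g y)) := by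
  -- ten is monotone in its second (hence by comm, first) argument
  have mono2 : ∀ u {v v' : V}, v ≤ v' → ten u v ≤ ten u v' := by
    intro u v v' h
    exact ((hom_adj u v (ten u v')).mpr (le_trans h ((hom_adj u v' (ten u v')).mp le_rfl)))
  have mono1 : ∀ {u u' : V} (v : V), u ≤ u' → ten u v ≤ ten u' v := by
    intro u u' v h
    rw [ten_comm u v, ten_comm u' v]; exact mono2 v h
  -- binary sup distributivity
  have ten_sup2 : ∀ u v w : V, ten u (v ⊔ w) = ten u v ⊔ ten u w := by
    intro u v w
    have := ten_sup u {v, w}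
    simpa [iSup_or, iSup_sup_eq, sup_comm] using this
  constructor
  · intro I f hf x y
    refine le_inf ?_ ?_
    · refine (hom_adj _ _ _).mp (le_iInf fun j => ?_)
      have h1 : ten (⨅ i, f i x) (a x y) ≤ ten (f j x) (a x y) :=
        mono1 _ (iInf_le _ j)
      have h2 : a x y ≤ hom (f j x) (f j y) := (hf j x y).trans inf_le_left
      exact h1.trans ((hom_adj _ _ _).mpr h2)
    · refine (hom_adj _ _ _).mp (le_iInf fun j => ?_)
      have h1 : ten (⨅ i, f i y) (a x y) ≤ ten (f j y) (a x y) :=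
        mono1 _ (iInf_le _ j)
      have h2 : a x y ≤ hom (f j y) (f j x) := (hf j x y).trans inf_le_right
      exact h1.trans ((hom_adj _ _ _).mpr h2)
  · intro f g hf hg x y
    refine le_inf ?_ ?_
    · refine (hom_adj _ _ _).mp ?_
      rw [ten_comm, ten_sup2, ten_comm (a x y) (f x), ten_comm (a x y) (g x)]
      refine sup_le ?_ ?_
      · exact ((hom_adj _ _ _).mpr ((hf x y).trans inf_le_left)).trans le_sup_left
      · exact ((hom_adj _ _ _).mpr ((hg x y).trans inf_le_left)).trans le_sup_right
    · refine (hom_adj _ _ _).mp ?_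
      rw [ten_comm, ten_sup2, ten_comm (a x y) (f y), ten_comm (a x y) (g y)]
      refine sup_le ?_ ?_
      · exact ((hom_adj _ _ _).mpr ((hf x y).trans inf_le_right)).trans le_sup_left
      · exact ((hom_adj _ _ _).mpr ((hg x y).trans inf_le_right)).trans le_sup_right
end

section
/- Let (X,d) be a totally bounded pseudometric space with d bounded by 1, and let A be a set of 1-Lipschitz (nonexpansive) functions X → [0,1]. Suppose that for every finite subset S ⊆ X, every function g : X → [0,1] whose restriction to S is 1-Lipschitz with respect to d, and every ε > 0, there exists f ∈ A with |f x − g x| ≤ ε for all x ∈ S. Then A is uniformly dense in the 1-Lipschitz functions on X: for every 1-Lipschitz g : X → [0,1] and every ε > 0 there exists f ∈ A with |f x − g x| ≤ ε for all x ∈ X. -/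
/-- In a totally bounded 1-bounded pseudometric space, a set A of
nonexpansive [0,1]-valued functions that approximates, on every finite subset,
every function which is 1-Lipschitz on that subset, is uniformly dense in the
1-Lipschitz functions. -/
theorem finite_approx_implies_uniform_dense
    {X : Type*} (d : X → X → ℝ)
    (hd_nonneg : ∀ x y, 0 ≤ d x y)
    (hd_refl : ∀ x, d x x = 0)
    (hd_symm : ∀ x y, d x y = d y x)
    (hd_tri : ∀ x y z, d x z ≤ d x y + d y z)
    (hd_bound : ∀ x y, d x y ≤ 1)
    (htb : ∀ ε : ℝ, 0 < ε → ∃ S : Finset X, ∀ x : X, ∃ y ∈ S, d x y < ε)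
    (A : Set (X → ℝ))
    (hA : ∀ f ∈ A, (∀ x, f x ∈ Set.Icc (0 : ℝ) 1) ∧ ∀ x y, |f x - f y| ≤ d x y)
    (happrox : ∀ (S : Finset X) (g : X → ℝ),
        (∀ x, g x ∈ Set.Icc (0 : ℝ) 1) →
        (∀ x ∈ S, ∀ y ∈ S, |g x - g y| ≤ d x y) →
        ∀ ε : ℝ, 0 < ε → ∃ f ∈ A, ∀ x ∈ S, |f x - g x| ≤ ε) :
    ∀ g : X → ℝ, (∀ x, g x ∈ Set.Icc (0 : ℝ) 1) →
      (∀ x y, |g x - g y| ≤ d x y) →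
      ∀ ε : ℝ, 0 < ε → ∃ f ∈ A, ∀ x : X, |f x - g x| ≤ ε := by
  intro g hg hglip ε hε
  obtain ⟨S, hS⟩ := htb (ε / 4) (by linarith)
  obtain ⟨f, hfA, hf⟩ := happrox S g hg (fun x _ y _ => hglip x y) (ε / 4) (by linarith)
  refine ⟨f, hfA, fun x => ?_⟩
  obtain ⟨y, hyS, hy⟩ := hS x
  have hflip := (hA f hfA).2 x y
  have h1 := hf y hyS
  have h2 := hglip y x
  calc |f x - g x| ≤ |f x - f y| + |f y - g y| + |g y - g x| := by
        have := abs_sub_abs_le_abs_sub (f x - g x) 0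
        calc |f x - g x| = |(f x - f y) + (f y - g y) + (g y - g x)| := by ring_nf
          _ ≤ |(f x - f y) + (f y - g y)| + |g y - g x| := abs_add_le _ _
          _ ≤ |f x - f y| + |f y - g y| + |g y - g x| := by
              gcongr; exact abs_add_le _ _
    _ ≤ d x y + ε / 4 + d y x := by gcongr
    _ ≤ ε := by rw [hd_symm y x]; linarith
end

section
/- Let (X,d) be a totally bounded pseudometric space with d bounded by 1, and let A be a set of 1-Lipschitz (nonexpansive) functions X → [0,1] such that: A contains the constant function 0; A is closed under pointwise maximum and pointwise minimum; for every u ∈ [0,1], A is closed under f ↦ (x ↦ min(f x + u, 1)) and under f ↦ (x ↦ |f x − u|); and A is initial, i.e. d x y = ⨆_{f∈A} |f x − f y| for all x,y ∈ X. Then A is uniformly dense in the 1-Lipschitz functions: for every 1-Lipschitz g : X → [0,1] and every ε > 0 there exists f ∈ A with |f x − g x| ≤ ε for all x ∈ X. -/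
/-!
Fix a finite `ε/3`-net `S`. Initiality gives, for any two points `p, q`, a map of `A` that
separates them almost as much as `d` does; cutting it off with `min`, `|· - u|` and
truncated addition produces an element of `A` that is `ε/3`-close to `g` at `p` and `q`.
The lattice argument of Stone–Weierstrass (a max over `p` of mins over `q`) glues these
into `f ∈ A` that is `ε/3`-close to `g` on `S`, and since `f` and `g` are both
nonexpansive, `f` is `ε`-close to `g` everywhere.
-/

open Set

section LatticeApproximation

variable {X : Type*} {A : Set (X → ℝ)}

theorem const_mem_of_zero_mem
    (hA_zero : (fun _ : X => (0 : ℝ)) ∈ A)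
    (hA_add : ∀ u ∈ Icc (0 : ℝ) 1, ∀ f ∈ A, (fun x => min (f x + u) 1) ∈ A)
    {c : ℝ} (hc : c ∈ Icc (0 : ℝ) 1) :
    (fun _ : X => c) ∈ A := by
  simpa [min_eq_left hc.2] using hA_add c hc _ hA_zero

theorem exists_mem_eq_and_abs_sub_le
    (hA_zero : (fun _ : X => (0 : ℝ)) ∈ A)
    (hA_min : ∀ f ∈ A, ∀ g ∈ A, (fun x => min (f x) (g x)) ∈ A)
    (hA_add : ∀ u ∈ Icc (0 : ℝ) 1, ∀ f ∈ A, (fun x => min (f x + u) 1) ∈ A)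
    (hA_dist : ∀ u ∈ Icc (0 : ℝ) 1, ∀ f ∈ A, (fun x => |f x - u|) ∈ A)
    {f : X → ℝ} (hf : f ∈ A) {x y : X} (hfy : f y ∈ Icc (0 : ℝ) 1)
    {a b δ : ℝ} (ha : a ≤ 1) (hb : 0 ≤ b) (hba : b ≤ a) (hδ : 0 ≤ δ)
    (hsep : a - b - δ ≤ |f x - f y|) :
    ∃ h ∈ A, |h x - a| ≤ δ ∧ h y = b := by
  have hab : a - b ∈ Icc (0 : ℝ) 1 := ⟨by linarith, by linarith⟩
  have hb1 : b ∈ Icc (0 : ℝ) 1 := ⟨hb, by linarith⟩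
  refine ⟨fun z => min (min |f z - f y| (a - b) + b) 1,
    hA_add b hb1 _
      (hA_min _ (hA_dist _ hfy _ hf) _ (const_mem_of_zero_mem hA_zero hA_add hab)), ?_, ?_⟩
  · have hlow : a - b - δ ≤ min |f x - f y| (a - b) := le_min hsep (by linarith)
    have hupp : min |f x - f y| (a - b) ≤ a - b := min_le_right _ _
    dsimp only
    rw [min_eq_left (show min |f x - f y| (a - b) + b ≤ 1 by linarith), abs_le]
    constructor <;> linarith
  · simp [min_eq_left hab.1, hb1.2]

theorem exists_mem_abs_sub_le_at_two_points (d : X → X → ℝ)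
    (hA : ∀ f ∈ A, ∀ x, f x ∈ Icc (0 : ℝ) 1)
    (hA_zero : (fun _ : X => (0 : ℝ)) ∈ A)
    (hA_min : ∀ f ∈ A, ∀ g ∈ A, (fun x => min (f x) (g x)) ∈ A)
    (hA_add : ∀ u ∈ Icc (0 : ℝ) 1, ∀ f ∈ A, (fun x => min (f x + u) 1) ∈ A)
    (hA_dist : ∀ u ∈ Icc (0 : ℝ) 1, ∀ f ∈ A, (fun x => |f x - u|) ∈ A)
    (hA_init : ∀ x y, d x y = ⨆ f : A, |f.1 x - f.1 y|)
    {g : X → ℝ} (hg : ∀ x, g x ∈ Icc (0 : ℝ) 1) {x y : X} (hg_lip : |g x - g y| ≤ d x y)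
    {δ : ℝ} (hδ : 0 < δ) :
    ∃ h ∈ A, |h x - g x| ≤ δ ∧ |h y - g y| ≤ δ := by
  have : Nonempty A := ⟨⟨_, hA_zero⟩⟩
  obtain ⟨⟨f, hf⟩, hsep⟩ : ∃ f : A, d x y - δ < |f.1 x - f.1 y| :=
    exists_lt_of_lt_ciSup (hA_init x y ▸ sub_lt_self _ hδ)
  have hsep' : |g x - g y| - δ ≤ |f x - f y| := by linarith
  rcases le_total (g y) (g x) with hyx | hxy
  · obtain ⟨h, hA_h, hx, hy⟩ := exists_mem_eq_and_abs_sub_le hA_zero hA_min hA_add hA_dist hf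
      (hA f hf y) (hg x).2 (hg y).1 hyx hδ.le (by linarith [le_abs_self (g x - g y)])
    exact ⟨h, hA_h, hx, by simp [hy, hδ.le]⟩
  · obtain ⟨h, hA_h, hy, hx⟩ := exists_mem_eq_and_abs_sub_le (x := y) (y := x) hA_zero hA_min
      hA_add hA_dist hf (hA f hf x) (hg y).2 (hg x).1 hxy hδ.le
      (by linarith [neg_abs_le (g x - g y), abs_sub_comm (f x) (f y)])
    exact ⟨h, hA_h, by simp [hx, hδ.le], hy⟩

theorem exists_mem_abs_sub_le_on_finset
    (hA_max : ∀ f ∈ A, ∀ g ∈ A, (fun x => max (f x) (g x)) ∈ A)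
    (hA_min : ∀ f ∈ A, ∀ g ∈ A, (fun x => min (f x) (g x)) ∈ A)
    {g : X → ℝ} {δ : ℝ} {S : Finset X} (hS : S.Nonempty)
    (hpair : ∀ p ∈ S, ∀ q ∈ S, ∃ h ∈ A, |h p - g p| ≤ δ ∧ |h q - g q| ≤ δ) :
    ∃ f ∈ A, ∀ q ∈ S, |f q - g q| ≤ δ := by
  choose! F hFA hFp hFq using hpair
  refine ⟨S.sup' hS fun p => S.inf' hS (F p),
    Finset.sup'_mem A hA_max S hS _ fun p hp =>
      Finset.inf'_mem A hA_min S hS _ fun q hq => hFA p hp q hq, fun q hq => ?_⟩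
  simp only [Finset.sup'_apply, Finset.inf'_apply]
  rw [abs_le]
  constructor
  · have hlow : g q - δ ≤ S.inf' hS fun r => F q r q :=
      Finset.le_inf' _ _ fun r hr => by linarith [(abs_le.1 (hFp q hq r hr)).1]
    linarith [Finset.le_sup' (fun p => S.inf' hS fun r => F p r q) hq]
  · have hupp : (S.sup' hS fun p => S.inf' hS fun r => F p r q) ≤ g q + δ :=
      Finset.sup'_le _ _ fun p hp =>
        (Finset.inf'_le _ hq).trans (by linarith [(abs_le.1 (hFq p hp q hq)).2])
    linarith

end LatticeApproximation

theorem abs_sub_le_abs_sub_add_two_mul {X : Type*} (d : X → X → ℝ) {f g : X → ℝ}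
    (hf : ∀ x y, |f x - f y| ≤ d x y) (hg : ∀ x y, |g x - g y| ≤ d x y) (x y : X) :
    |f x - g x| ≤ |f y - g y| + 2 * d x y := by
  have h₁ := abs_sub_le (f x) (f y) (g x)
  have h₂ := abs_sub_le (f y) (g y) (g x)
  linarith [hf x y, hg x y, abs_sub_comm (g y) (g x)]

theorem sw_totally_bounded_general
    {X : Type*} (d : X → X → ℝ)
    (htb : ∀ ε : ℝ, 0 < ε → ∃ S : Finset X, ∀ x : X, ∃ y ∈ S, d x y < ε)
    (A : Set (X → ℝ))
    (hA : ∀ f ∈ A, (∀ x, f x ∈ Set.Icc (0 : ℝ) 1) ∧ ∀ x y, |f x - f y| ≤ d x y)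
    (hA_zero : (fun _ : X => (0 : ℝ)) ∈ A)
    (hA_max : ∀ f ∈ A, ∀ g ∈ A, (fun x => max (f x) (g x)) ∈ A)
    (hA_min : ∀ f ∈ A, ∀ g ∈ A, (fun x => min (f x) (g x)) ∈ A)
    (hA_add : ∀ u ∈ Set.Icc (0 : ℝ) 1, ∀ f ∈ A, (fun x => min (f x + u) 1) ∈ A)
    (hA_dist : ∀ u ∈ Set.Icc (0 : ℝ) 1, ∀ f ∈ A, (fun x => |f x - u|) ∈ A)
    (hA_init : ∀ x y, d x y = ⨆ f : A, |f.1 x - f.1 y|) :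
    ∀ g : X → ℝ, (∀ x, g x ∈ Set.Icc (0 : ℝ) 1) →
      (∀ x y, |g x - g y| ≤ d x y) →
      ∀ ε : ℝ, 0 < ε → ∃ f ∈ A, ∀ x : X, |f x - g x| ≤ ε := by
  intro g hg hg_lip ε hε
  rcases isEmpty_or_nonempty X with hX | ⟨⟨x₀⟩⟩
  · exact ⟨_, hA_zero, fun x => isEmptyElim x⟩
  obtain ⟨S, hS⟩ := htb (ε / 3) (by positivity)
  have hS_ne : S.Nonempty := let ⟨y, hy, _⟩ := hS x₀; ⟨y, hy⟩
  obtain ⟨f, hfA, hf⟩ := exists_mem_abs_sub_le_on_finset hA_max hA_min hS_ne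
    fun p _ q _ => exists_mem_abs_sub_le_at_two_points d (fun f hf => (hA f hf).1) hA_zero
      hA_min hA_add hA_dist hA_init hg (hg_lip p q) (by positivity : 0 < ε / 3)
  refine ⟨f, hfA, fun x => ?_⟩
  obtain ⟨y, hy, hxy⟩ := hS x
  calc |f x - g x| ≤ |f y - g y| + 2 * d x y :=
        abs_sub_le_abs_sub_add_two_mul d (hA f hfA).2 hg_lip x y
    _ ≤ ε := by linarith [hf y hy]

/-- Stone-Weierstrass for totally bounded pseudometric spaces: an
initial propositional algebra A of nonexpansive [0,1]-valued functions (containing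
the constant 0, closed under pointwise max, pointwise min, truncated addition of
constants, and distance to constants) is uniformly dense in the 1-Lipschitz
functions. -/
theorem sw_totally_bounded
    {X : Type*} (d : X → X → ℝ)
    (hd_nonneg : ∀ x y, 0 ≤ d x y)
    (hd_refl : ∀ x, d x x = 0)
    (hd_symm : ∀ x y, d x y = d y x)
    (hd_tri : ∀ x y z, d x z ≤ d x y + d y z)
    (hd_bound : ∀ x y, d x y ≤ 1)
    (htb : ∀ ε : ℝ, 0 < ε → ∃ S : Finset X, ∀ x : X, ∃ y ∈ S, d x y < ε)
    (A : Set (X → ℝ))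
    (hA : ∀ f ∈ A, (∀ x, f x ∈ Set.Icc (0 : ℝ) 1) ∧ ∀ x y, |f x - f y| ≤ d x y)
    (hA_zero : (fun _ : X => (0 : ℝ)) ∈ A)
    (hA_max : ∀ f ∈ A, ∀ g ∈ A, (fun x => max (f x) (g x)) ∈ A)
    (hA_min : ∀ f ∈ A, ∀ g ∈ A, (fun x => min (f x) (g x)) ∈ A)
    (hA_add : ∀ u ∈ Set.Icc (0 : ℝ) 1, ∀ f ∈ A, (fun x => min (f x + u) 1) ∈ A)
    (hA_dist : ∀ u ∈ Set.Icc (0 : ℝ) 1, ∀ f ∈ A, (fun x => |f x - u|) ∈ A)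
    (hA_init : ∀ x y, d x y = ⨆ f : A, |f.1 x - f.1 y|) :
    ∀ g : X → ℝ, (∀ x, g x ∈ Set.Icc (0 : ℝ) 1) →
      (∀ x y, |g x - g y| ≤ d x y) →
      ∀ ε : ℝ, 0 < ε → ∃ f ∈ A, ∀ x : X, |f x - g x| ≤ ε :=
  sw_totally_bounded_general d htb A hA hA_zero hA_max hA_min hA_add hA_dist hA_init
end
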